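/- arXiv:2002.00218 — 6 statements merged into one kernel-verified Lean document; each statement's English description precedes it below -/
import Mathlib

section
/- (Nonlinear Sturm-Liouville property, equation (204)) Let σ be a Sturm permutation of {1,…,N} and 1 ≤ j < k ≤ N. Then |i_{j+1} − i_j| = 1, and the zero number satisfies z_{j,k} = i_j + c(j,k;j) if i_{j+1} = i_j + 1 (equivalently, the arc of the meander between the crossings j and j+1 lies in an odd quadrant with respect to j), while z_{j,k} = i_j − 1 + c(j,k;j) if i_{j+1} = i_j − 1 (even quadrant). Equivalently, z_{j,k} = min(i_j, i_{j+1}) + c(j,k;j). -/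
/-!  Combinatorial framework for Sturm permutations, following
Fiedler–Rocha.  A permutation `σ` of `ℕ` represents a permutation of the
labels `{1,…,N}`; it is required to fix all labels outside of `{1,…,N}`.
`pos σ j = σ⁻¹ j` is the position of the label `j` on the horizontal axis. -/

/-- Position of the label `j` on the horizontal axis: `pos j = σ⁻¹ j`. -/
def pos (σ : Equiv.Perm ℕ) (j : ℕ) : ℤ := (σ.symm j : ℤ)

/-- Morse numbers: `i₁ = 0`, `i_{j+1} = i_j + (-1)^(j+1) · sign (pos (j+1) - pos j)`. -/
def morse (σ : Equiv.Perm ℕ) : ℕ → ℤ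
  | 0 => 0
  | 1 => 0
  | (j + 2) => morse σ (j + 1) + (-1) ^ (j + 2) * Int.sign (pos σ (j + 2) - pos σ (j + 1))

/-- Lower position endpoint of the arc joining positions of labels `j` and `j+1`. -/
def arcLo (σ : Equiv.Perm ℕ) (j : ℕ) : ℕ := min (σ.symm j) (σ.symm (j + 1))

/-- Upper position endpoint of the arc joining positions of labels `j` and `j+1`. -/
def arcHi (σ : Equiv.Perm ℕ) (j : ℕ) : ℕ := max (σ.symm j) (σ.symm (j + 1))

/-- Meander permutation: any two arcs in the same half-plane (arc `j` lies in the
upper half-plane for odd `j`, in the lower one for even `j`) have position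
intervals that are disjoint or strictly nested. -/
def IsMeander (N : ℕ) (σ : Equiv.Perm ℕ) : Prop :=
  ∀ j k, 1 ≤ j → j < N → 1 ≤ k → k < N → j ≠ k → j % 2 = k % 2 →
    arcHi σ j < arcLo σ k ∨ arcHi σ k < arcLo σ j ∨
    (arcLo σ j < arcLo σ k ∧ arcHi σ k < arcHi σ j) ∨
    (arcLo σ k < arcLo σ j ∧ arcHi σ j < arcHi σ k)

/-- A Sturm permutation of `{1,…,N}` (`N` odd): a dissipative Morse meander
permutation, represented as a permutation of `ℕ` fixing everything outside `{1,…,N}`. -/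
structure IsSturm (N : ℕ) (σ : Equiv.Perm ℕ) : Prop where
  odd_N : Odd N
  one_le : 1 ≤ N
  fix_outside : ∀ j, j = 0 ∨ N < j → σ j = j
  dissip_one : σ 1 = 1
  dissip_N : σ N = N
  meander : IsMeander N σ
  morse_nonneg : ∀ j, 1 ≤ j → j ≤ N → 0 ≤ morse σ j

/-- Zero numbers, downward recursion: `z_{j,N} = 0` and
`z_{j,k} = z_{j,k+1} + (1/2)·(-1)^k·[sign(pos(k+1)-pos j) - sign(pos k - pos j)]`. -/
def znRec (σ : Equiv.Perm ℕ) (N j k : ℕ) : ℤ :=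
  if h : N ≤ k then 0
  else znRec σ N j (k + 1) +
    ((-1 : ℤ) ^ k * (Int.sign (pos σ (k + 1) - pos σ j) - Int.sign (pos σ k - pos σ j))) / 2
termination_by N - k
decreasing_by omega

/-- Symmetrized zero number `z_{j,k} = z_{k,j}`. -/
def znum (σ : Equiv.Perm ℕ) (N j k : ℕ) : ℤ :=
  if j ≤ k then znRec σ N j k else znRec σ N k j

/-- `a` and `b` are `z`-adjacent: no label `m` strictly between them (in the label
order) with `z_{a,m} = z_{m,b} = z_{a,b}`. -/
def ZAdj (σ : Equiv.Perm ℕ) (N a b : ℕ) : Prop :=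
  ∀ m, min a b < m → m < max a b →
    ¬ (znum σ N (min a b) m = znum σ N a b ∧ znum σ N m (max a b) = znum σ N a b)

/-- Heteroclinic connection `a ⤳ b`: `i_a > i_b` and `a, b` are `z`-adjacent. -/
def Connects (σ : Equiv.Perm ℕ) (N a b : ℕ) : Prop :=
  morse σ b < morse σ a ∧ ZAdj σ N a b

/-- The target set `E^k_s(j0)`; the sign `s = true` stands for `+`, `s = false` for `−`. -/
def targetSet (σ : Equiv.Perm ℕ) (N j0 : ℕ) (k : ℤ) (s : Bool) : Set ℕ :=
  {m | 1 ≤ m ∧ m ≤ N ∧ (if s then j0 < m else m < j0) ∧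
       znum σ N j0 m = k ∧ Connects σ N j0 m}

/-- `pos_ι`: position of the label `m` in the boundary order at `x = ι`:
`pos_0 m = m` and `pos_1 m = σ⁻¹ m`. -/
def posFn (σ : Equiv.Perm ℕ) (ι : Fin 2) (m : ℕ) : ℤ :=
  if ι = 0 then (m : ℤ) else (σ.symm m : ℤ)

/-- `w` is the element of `E` closest to `j0` with respect to the position function `p`. -/
def IsClosest (p : ℕ → ℤ) (j0 : ℕ) (E : Set ℕ) (w : ℕ) : Prop :=
  w ∈ E ∧ ∀ m ∈ E, |p w - p j0| ≤ |p m - p j0|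

/-- `w` is the element of `E` most distant from `j0` with respect to the position
function `p`. -/
def IsFarthest (p : ℕ → ℤ) (j0 : ℕ) (E : Set ℕ) (w : ℕ) : Prop :=
  w ∈ E ∧ ∀ m ∈ E, |p m - p j0| ≤ |p w - p j0|

/-- The boundary neighbors of `j0`: `w^0_± = j0 ± 1` and `w^1_± = σ(σ⁻¹ j0 ± 1)`
(`s = true` is `+`, `s = false` is `−`; subtraction is truncated ℕ-subtraction,
definedness being imposed by the requirement `1 ≤ w ≤ N`). -/
def bdryNbr (σ : Equiv.Perm ℕ) (j0 : ℕ) (ι : Fin 2) (s : Bool) : ℕ :=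
  if ι = 0 then (if s then j0 + 1 else j0 - 1)
  else (if s then σ (σ.symm j0 + 1) else σ (σ.symm j0 - 1))

/-- Elementary crossing number `c(k,k+1;ℓ)`. -/
def cross1 (σ : Equiv.Perm ℕ) (k ℓ : ℕ) : ℤ :=
  if ℓ = k ∨ ℓ = k + 1 then 0
  else ((-1 : ℤ) ^ (k + 1) *
    (Int.sign (pos σ (k + 1) - pos σ ℓ) - Int.sign (pos σ k - pos σ ℓ))) / 2

/-- Crossing number `c(j,k;ℓ) = Σ_{m=j}^{k-1} c(m,m+1;ℓ)`. -/
def cross (σ : Equiv.Perm ℕ) (j k ℓ : ℕ) : ℤ :=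
  ∑ m ∈ Finset.Ico j k, cross1 σ m ℓ

/-! ### Shifted conventions, for permutations of the label set `{0,…,N+1}`
(used for the suspension `σ̃` of a Sturm permutation). -/

/-- Morse numbers for the shifted label set `{0,…,M}`:
`ĩ_0 = 0`, `ĩ_{j+1} = ĩ_j + (-1)^j · sign (pos (j+1) - pos j)`. -/
def morseT (σ : Equiv.Perm ℕ) : ℕ → ℤ
  | 0 => 0
  | (j + 1) => morseT σ j + (-1) ^ j * Int.sign (pos σ (j + 1) - pos σ j)

/-- Meander property for the shifted label set `{0,…,M}`: arc `j` (for `0 ≤ j < M`)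
lies in the upper half-plane for even `j` and in the lower one for odd `j`. -/
def IsMeanderT (M : ℕ) (σ : Equiv.Perm ℕ) : Prop :=
  ∀ j k, j < M → k < M → j ≠ k → j % 2 = k % 2 →
    arcHi σ j < arcLo σ k ∨ arcHi σ k < arcLo σ j ∨
    (arcLo σ j < arcLo σ k ∧ arcHi σ k < arcHi σ j) ∨
    (arcLo σ k < arcLo σ j ∧ arcHi σ j < arcHi σ k)

/-- Zero numbers for the shifted label set `{0,…,M}`: `z̃_{j,M} = 0` and
`z̃_{j,k} = z̃_{j,k+1} + (1/2)·(-1)^{k+1}·[sign(pos(k+1)-pos j) - sign(pos k - pos j)]`. -/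
def znRecT (σ : Equiv.Perm ℕ) (M j k : ℕ) : ℤ :=
  if h : M ≤ k then 0
  else znRecT σ M j (k + 1) +
    ((-1 : ℤ) ^ (k + 1) * (Int.sign (pos σ (k + 1) - pos σ j) - Int.sign (pos σ k - pos σ j))) / 2
termination_by M - k
decreasing_by omega

/-- Symmetrized shifted zero number. -/
def znumT (σ : Equiv.Perm ℕ) (M j k : ℕ) : ℤ :=
  if j ≤ k then znRecT σ M j k else znRecT σ M k j

/-- `z`-adjacency with respect to the shifted zero numbers. -/
def ZAdjT (σ : Equiv.Perm ℕ) (M a b : ℕ) : Prop :=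
  ∀ m, min a b < m → m < max a b →
    ¬ (znumT σ M (min a b) m = znumT σ M a b ∧ znumT σ M m (max a b) = znumT σ M a b)

/-- Heteroclinic connection with respect to the shifted data. -/
def ConnectsT (σ : Equiv.Perm ℕ) (M a b : ℕ) : Prop :=
  morseT σ b < morseT σ a ∧ ZAdjT σ M a b

/-- Target set `E^k_s(j0)` for the shifted data (labels `{0,…,M}`). -/
def targetSetT (σ : Equiv.Perm ℕ) (M j0 : ℕ) (k : ℤ) (s : Bool) : Set ℕ :=
  {m | m ≤ M ∧ (if s then j0 < m else m < j0) ∧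
       znumT σ M j0 m = k ∧ ConnectsT σ M j0 m}

/-! ### Auxiliary development -/

namespace SturmNSL

open Finset

lemma pm_pow (m : ℕ) : ((-1 : ℤ)) ^ m = 1 ∨ ((-1 : ℤ)) ^ m = -1 := by
  rcases Nat.even_or_odd m with h | h
  · left; exact h.neg_one_pow
  · right; exact h.neg_one_pow

lemma pm_mul {x y : ℤ} (hx : x = 1 ∨ x = -1) (hy : y = 1 ∨ y = -1) :
    x * y = 1 ∨ x * y = -1 := by
  rcases hx with rfl | rfl <;> rcases hy with rfl | rfl <;> norm_num

lemma sign_cases {a b : ℤ} (h : a ≠ b) :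
    (Int.sign (a - b) = 1 ∧ b < a) ∨ (Int.sign (a - b) = -1 ∧ a < b) := by
  rcases lt_or_gt_of_ne h with h' | h'
  · right; exact ⟨Int.sign_eq_neg_one_of_neg (by omega), h'⟩
  · left; exact ⟨Int.sign_eq_one_of_pos (by omega), h'⟩

lemma sign_pos' {a b : ℤ} (h : b < a) : Int.sign (a - b) = 1 :=
  Int.sign_eq_one_of_pos (by omega)

lemma sign_neg' {a b : ℤ} (h : a < b) : Int.sign (a - b) = -1 :=
  Int.sign_eq_neg_one_of_neg (by omega)

/-- Abstract Morse numbers for a position function `p`. -/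
def mval (p : ℕ → ℤ) : ℕ → ℤ
  | 0 => 0
  | 1 => 0
  | (j + 2) => mval p (j + 1) + (-1) ^ (j + 2) * Int.sign (p (j + 2) - p (j + 1))

lemma mval_succ (p : ℕ → ℤ) {j : ℕ} (hj : 1 ≤ j) :
    mval p (j + 1) = mval p j + (-1) ^ (j + 1) * Int.sign (p (j + 1) - p j) := by
  obtain ⟨i, rfl⟩ : ∃ i, j = i + 1 := ⟨j - 1, by omega⟩
  rfl

/-- Doubled elementary winding term. -/
def dx (p : ℕ → ℤ) (q : ℤ) (m : ℕ) : ℤ :=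
  (-1) ^ m * (Int.sign (p (m + 1) - q) - Int.sign (p m - q))

/-- Doubled winding number of the tail of the meander around position `p j`. -/
def DW (p : ℕ → ℤ) (N j : ℕ) : ℤ := ∑ m ∈ Finset.Ico (j + 1) N, dx p (p j) m

/-- Abstract dissipative meander data. -/
structure Good (N : ℕ) (p : ℕ → ℤ) : Prop where
  inj : ∀ a b, 1 ≤ a → a ≤ N → 1 ≤ b → b ≤ N → p a = p b → a = b
  bnd : ∀ m, 1 < m → m < N → p 1 < p m ∧ p m < p N
  mea : ∀ j k, 1 ≤ j → j < N → 1 ≤ k → k < N → j ≠ k → j % 2 = k % 2 →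
    max (p j) (p (j+1)) < min (p k) (p (k+1)) ∨
    max (p k) (p (k+1)) < min (p j) (p (j+1)) ∨
    (min (p j) (p (j+1)) < min (p k) (p (k+1)) ∧ max (p k) (p (k+1)) < max (p j) (p (j+1))) ∨
    (min (p k) (p (k+1)) < min (p j) (p (j+1)) ∧ max (p j) (p (j+1)) < max (p k) (p (k+1)))

/-- Arc `n` is a "nose": no other position value lies between its endpoints,
and it is interior. -/
def Gap (N : ℕ) (p : ℕ → ℤ) (n : ℕ) : Prop :=
  2 ≤ n ∧ n + 2 ≤ N ∧ ∀ m, 1 ≤ m → m ≤ N → m ≠ n → m ≠ n + 1 →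
    (p m < p n ∧ p m < p (n + 1)) ∨ (p n < p m ∧ p (n + 1) < p m)

/-- min/max-free form of the meander separation condition. -/
lemma spans {a b c d : ℤ}
    (h : max a b < min c d ∨ max c d < min a b ∨
      (min a b < min c d ∧ max c d < max a b) ∨
      (min c d < min a b ∧ max a b < max c d)) :
    (a < c ∧ a < d ∧ b < c ∧ b < d) ∨ (c < a ∧ c < b ∧ d < a ∧ d < b) ∨
    (((a < c ∧ c < b) ∨ (b < c ∧ c < a)) ∧ ((a < d ∧ d < b) ∨ (b < d ∧ d < a))) ∨
    (((c < a ∧ a < d) ∨ (d < a ∧ a < c)) ∧ ((c < b ∧ b < d) ∨ (d < b ∧ b < c))) := by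
  have m1 := min_choice a b; have m2 := min_choice c d
  have m3 := max_choice a b; have m4 := max_choice c d
  have l1 := min_le_left a b; have l2 := min_le_right a b
  have l3 := le_max_left a b; have l4 := le_max_right a b
  have l5 := min_le_left c d; have l6 := min_le_right c d
  have l7 := le_max_left c d; have l8 := le_max_right c d
  rcases h with h | h | h | h
  · refine Or.inl ?_; omega
  · refine Or.inr (Or.inl ?_); omega
  · refine Or.inr (Or.inr (Or.inl ⟨?_, ?_⟩)) <;> omega
  · refine Or.inr (Or.inr (Or.inr ⟨?_, ?_⟩)) <;> omega

lemma spans' {a b c d : ℤ}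
    (h : (a < c ∧ a < d ∧ b < c ∧ b < d) ∨ (c < a ∧ c < b ∧ d < a ∧ d < b) ∨
      (((a < c ∧ c < b) ∨ (b < c ∧ c < a)) ∧ ((a < d ∧ d < b) ∨ (b < d ∧ d < a))) ∨
      (((c < a ∧ a < d) ∨ (d < a ∧ a < c)) ∧ ((c < b ∧ b < d) ∨ (d < b ∧ b < c)))) :
    max a b < min c d ∨ max c d < min a b ∨
      (min a b < min c d ∧ max c d < max a b) ∨
      (min c d < min a b ∧ max a b < max c d) := by
  have m1 := min_choice a b; have m2 := min_choice c d
  have m3 := max_choice a b; have m4 := max_choice c d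
  have l1 := min_le_left a b; have l2 := min_le_right a b
  have l3 := le_max_left a b; have l4 := le_max_right a b
  have l5 := min_le_left c d; have l6 := min_le_right c d
  have l7 := le_max_left c d; have l8 := le_max_right c d
  rcases h with h | h | h | h
  · refine Or.inl ?_; omega
  · refine Or.inr (Or.inl ?_); omega
  · refine Or.inr (Or.inr (Or.inl ⟨?_, ?_⟩)) <;> omega
  · refine Or.inr (Or.inr (Or.inr ⟨?_, ?_⟩)) <;> omega

lemma min_ident1 (a x y : ℤ) (hx : x = 1 ∨ x = -1) (hy : y = 1 ∨ y = -1) :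
    2 * min a (a + x) = -(y - x) + 2 * min a (a + y) := by
  rcases hx with rfl | rfl <;> rcases hy with rfl | rfl <;>
    simp only [min_def] <;> split_ifs <;> omega

lemma min_ident2 (a x y : ℤ) (hx : x = 1 ∨ x = -1) (hy : y = 1 ∨ y = -1) :
    2 * min a (a + x) = (y - x) + 2 * min (a + x) (a + x - y) := by
  rcases hx with rfl | rfl <;> rcases hy with rfl | rfl <;>
    simp only [min_def] <;> split_ifs <;> omega

lemma not_smaller {pu pu1 pn pn1 x : ℤ}
    (sp : (pu < pn ∧ pu < pn1 ∧ pu1 < pn ∧ pu1 < pn1) ∨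
      (pn < pu ∧ pn < pu1 ∧ pn1 < pu ∧ pn1 < pu1) ∨
      (((pu < pn ∧ pn < pu1) ∨ (pu1 < pn ∧ pn < pu)) ∧ ((pu < pn1 ∧ pn1 < pu1) ∨ (pu1 < pn1 ∧ pn1 < pu))) ∨
      (((pn < pu ∧ pu < pn1) ∨ (pn1 < pu ∧ pu < pn)) ∧ ((pn < pu1 ∧ pu1 < pn1) ∨ (pn1 < pu1 ∧ pu1 < pn))))
    (hin : (pn < x ∧ x < pn1) ∨ (pn1 < x ∧ x < pn))
    (hx : pu = x ∨ pu1 = x)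
    (hmin : pn ⊔ pn1 - pn ⊓ pn1 ≤ pu ⊔ pu1 - pu ⊓ pu1) : False := by
  have m1 := min_choice pu pu1; have m2 := min_choice pn pn1
  have m3 := max_choice pu pu1; have m4 := max_choice pn pn1
  have l1 := min_le_left pu pu1; have l2 := min_le_right pu pu1
  have l3 := le_max_left pu pu1; have l4 := le_max_right pu pu1
  have l5 := min_le_left pn pn1; have l6 := min_le_right pn pn1
  have l7 := le_max_left pn pn1; have l8 := le_max_right pn pn1
  omega

lemma not_low {pu pu1 pn pn1 x : ℤ}
    (sp : (pu < pn ∧ pu < pn1 ∧ pu1 < pn ∧ pu1 < pn1) ∨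
      (pn < pu ∧ pn < pu1 ∧ pn1 < pu ∧ pn1 < pu1) ∨
      (((pu < pn ∧ pn < pu1) ∨ (pu1 < pn ∧ pn < pu)) ∧ ((pu < pn1 ∧ pn1 < pu1) ∨ (pu1 < pn1 ∧ pn1 < pu))) ∨
      (((pn < pu ∧ pu < pn1) ∨ (pn1 < pu ∧ pu < pn)) ∧ ((pn < pu1 ∧ pu1 < pn1) ∨ (pn1 < pu1 ∧ pu1 < pn))))
    (hin : (pn < x ∧ x < pn1) ∨ (pn1 < x ∧ x < pn))
    (hx : pu = x ∨ pu1 = x)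
    (hb1 : pu < pn) (hb2 : pu < pn1) : False := by omega

lemma not_high {pu pu1 pn pn1 x : ℤ}
    (sp : (pu < pn ∧ pu < pn1 ∧ pu1 < pn ∧ pu1 < pn1) ∨
      (pn < pu ∧ pn < pu1 ∧ pn1 < pu ∧ pn1 < pu1) ∨
      (((pu < pn ∧ pn < pu1) ∨ (pu1 < pn ∧ pn < pu)) ∧ ((pu < pn1 ∧ pn1 < pu1) ∨ (pu1 < pn1 ∧ pn1 < pu))) ∨
      (((pn < pu ∧ pu < pn1) ∨ (pn1 < pu ∧ pu < pn)) ∧ ((pn < pu1 ∧ pu1 < pn1) ∨ (pn1 < pu1 ∧ pu1 < pn))))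
    (hin : (pn < x ∧ x < pn1) ∨ (pn1 < x ∧ x < pn))
    (hx : pu = x)
    (hb1 : pn < pu1) (hb2 : pn1 < pu1) : False := by omega

set_option maxHeartbeats 1000000 in
lemma exists_gap {N : ℕ} {p : ℕ → ℤ} (G : Good N p) (hN : Odd N) (h5 : 5 ≤ N)
    (par : ℕ) (hpar : par = 0 ∨ par = 1) :
    ∃ n, Gap N p n ∧ n % 2 = par := by
  classical
  have hne2 : (2 + par) ∈ (Finset.Ico 2 (N-1)).filter (fun m => m % 2 = par) := by
    simp only [Finset.mem_filter, Finset.mem_Ico]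
    omega
  obtain ⟨n, hnS, hmin⟩ := Finset.exists_min_image
    ((Finset.Ico 2 (N-1)).filter (fun m => m % 2 = par))
    (fun m => max (p m) (p (m+1)) - min (p m) (p (m+1))) ⟨2 + par, hne2⟩
  simp only [Finset.mem_filter, Finset.mem_Ico] at hnS
  obtain ⟨⟨hn2, hnN1⟩, hnpar⟩ := hnS
  refine ⟨n, ⟨by omega, by omega, ?_⟩, hnpar⟩
  intro m h1 hmN hmn hmn1
  by_contra hcon
  have e1 : p m ≠ p n := fun hc => hmn (G.inj m n (by omega) (by omega) (by omega) (by omega) hc)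
  have e2 : p m ≠ p (n+1) := fun hc => hmn1 (G.inj m (n+1) (by omega) (by omega) (by omega) (by omega) hc)
  have hin : (p n < p m ∧ p m < p (n+1)) ∨ (p (n+1) < p m ∧ p m < p n) := by
    rcases lt_or_gt_of_ne e1 with h | h <;> rcases lt_or_gt_of_ne e2 with h' | h' <;>
      first
        | (exfalso; exact hcon (by omega))
        | omega
  clear hcon
  have hbn := G.bnd n (by omega) (by omega)
  have hbn1 := G.bnd (n+1) (by omega) (by omega)
  have hm1' : m ≠ 1 := by rintro rfl; omega
  have hmN' : m ≠ N := by rintro rfl; omega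
  set u := if m % 2 = par then m else m - 1 with hu
  have hum : p u = p m ∨ p (u + 1) = p m := by
    by_cases hc : m % 2 = par
    · left; rw [hu]; simp [hc]
    · right
      have : u + 1 = m := by rw [hu]; simp [hc]; omega
      rw [this]
  have hu1 : 1 ≤ u := by rw [hu]; split <;> omega
  have huN : u < N := by rw [hu]; split <;> omega
  have hupar : u % 2 = par := by rw [hu]; split <;> omega
  have hun : u ≠ n := by rw [hu]; split <;> omega
  have sp := spans (G.mea u n hu1 huN (by omega) (by omega) hun (by omega))
  by_cases hub : u = 1
  · rw [hub] at sp hum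
    exact not_low sp hin hum hbn.1 hbn1.1
  by_cases hub2 : u = N - 1
  · have hx : p u = p m := by
      rcases hum with h | h
      · exact h
      · exfalso
        rw [show u + 1 = N by omega] at h
        exact hmN' (G.inj m N (by omega) (by omega) (by omega) (by omega) h.symm)
    rw [show u + 1 = N by omega] at sp
    exact not_high sp hin hx hbn.2 hbn1.2
  · have humem : u ∈ (Finset.Ico 2 (N-1)).filter (fun m => m % 2 = par) := by
      simp only [Finset.mem_filter, Finset.mem_Ico]
      omega
    exact not_smaller sp hin hum (hmin u humem)


lemma sign_ident {N n : ℕ} {p : ℕ → ℤ} (G : Good N p) (hg : Gap N p n) :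
    Int.sign (p (n + 2) - p (n - 1)) =
      Int.sign (p n - p (n - 1)) - Int.sign (p (n + 1) - p n)
        + Int.sign (p (n + 2) - p (n + 1)) := by
  obtain ⟨hn2, hnN, hgap⟩ := hg
  have hne : ∀ a b : ℕ, 1 ≤ a → a ≤ N → 1 ≤ b → b ≤ N → a ≠ b → p a ≠ p b := by
    intro a b ha1 haN hb1 hbN hab hc
    exact hab (G.inj a b ha1 haN hb1 hbN hc)
  have g1 := hgap (n - 1) (by omega) (by omega) (by omega) (by omega)
  have g2 := hgap (n + 2) (by omega) (by omega) (by omega) (by omega)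
  have me := G.mea (n - 1) (n + 1) (by omega) (by omega) (by omega) (by omega)
    (by omega) (by omega)
  rw [show n - 1 + 1 = n by omega, show n + 1 + 1 = n + 2 by omega] at me
  have sp := spans me
  rcases sign_cases (hne n (n-1) (by omega) (by omega) (by omega) (by omega) (by omega)) with
    ⟨e1, o1⟩ | ⟨e1, o1⟩ <;>
  rcases sign_cases (hne (n+1) n (by omega) (by omega) (by omega) (by omega) (by omega)) with
    ⟨e2, o2⟩ | ⟨e2, o2⟩ <;>
  rcases sign_cases (hne (n+2) (n+1) (by omega) (by omega) (by omega) (by omega) (by omega)) with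
    ⟨e3, o3⟩ | ⟨e3, o3⟩ <;>
  rcases sign_cases (hne (n+2) (n-1) (by omega) (by omega) (by omega) (by omega) (by omega)) with
    ⟨e4, o4⟩ | ⟨e4, o4⟩ <;>
  rw [e1, e2, e3, e4] <;> omega

lemma mval_pres {N n : ℕ} {p : ℕ → ℤ} (G : Good N p) (hg : Gap N p n) :
    ∀ l, 1 ≤ l → mval (fun t => if t < n then p t else p (t + 2)) l
        = mval p (if l < n then l else l + 2) := by
  have hn2 := hg.1
  intro l hl
  induction l with
  | zero => omega
  | succ m IH =>
    rcases Nat.eq_or_lt_of_le hl with h1 | h1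
    · have hm0 : m = 0 := by omega
      subst hm0
      rw [if_pos (by omega : 1 < n)]
      rfl
    · have hm1 : 1 ≤ m := by omega
      have IH' := IH hm1
      rcases Nat.lt_trichotomy (m + 1) n with hc | hc | hc
      · -- both < n
        rw [if_pos hc, if_pos (by omega : m < n)] at *
        rw [mval_succ _ hm1, mval_succ p hm1, IH']
        simp only [if_pos hc, if_pos (show m < n by omega)]
      · -- m + 1 = n : the merged step
        have hn : n = m + 1 := hc.symm
        subst hn
        rw [if_neg (by omega : ¬ m + 1 < m + 1)]
        rw [if_pos (by omega : m < m + 1)] at IH'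
        have key := sign_ident G hg
        rw [show m + 1 - 1 = m by omega] at key
        have E1 : mval p (m + 1) = mval p m + (-1) ^ (m+1) * Int.sign (p (m+1) - p m) :=
          mval_succ p hm1
        have E2 : mval p (m + 2) = mval p (m+1) + (-1) ^ (m+2) * Int.sign (p (m+2) - p (m+1)) :=
          mval_succ p (by omega)
        have E3 : mval p (m + 3) = mval p (m+2) + (-1) ^ (m+3) * Int.sign (p (m+3) - p (m+2)) := by
          have := mval_succ p (show 1 ≤ m + 2 by omega)
          rw [show m + 2 + 1 = m + 3 by omega] at this
          exact this
        have hLHS := mval_succ (fun t => if t < m + 1 then p t else p (t + 2)) hm1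
        simp only [if_neg (show ¬ m + 1 < m + 1 by omega), if_pos (show m < m + 1 by omega)] at hLHS
        rw [hLHS, IH']
        rw [show m + 1 + 2 = m + 3 by omega, E3, E2, E1, key]
        have pw1 : (-1 : ℤ) ^ (m + 2) = -(-1 : ℤ) ^ (m + 1) := by rw [pow_succ]; ring
        have pw2 : (-1 : ℤ) ^ (m + 3) = (-1 : ℤ) ^ (m + 1) := by
          rw [show m + 3 = (m + 1) + 2 by omega, pow_add]; norm_num
        rw [pw1, pw2]; ring
      · -- m ≥ n
        rw [if_neg (by omega : ¬ m + 1 < n)]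
        rw [if_neg (by omega : ¬ m < n)] at IH'
        have hLHS := mval_succ (fun t => if t < n then p t else p (t + 2)) hm1
        simp only [if_neg (show ¬ m + 1 < n by omega), if_neg (show ¬ m < n by omega)] at hLHS
        rw [hLHS, IH']
        have E := mval_succ p (show 1 ≤ m + 2 by omega)
        rw [show m + 2 + 1 = m + 3 by omega] at E
        rw [show m + 1 + 2 = m + 3 by omega, E, show m + 1 + 1 = m + 2 by omega]
        have pw : (-1 : ℤ) ^ (m + 3) = (-1 : ℤ) ^ (m + 1) := by
          rw [show m + 3 = (m + 1) + 2 by omega, pow_add]; norm_num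
        rw [pw]

lemma plain_flip {a b c d : ℤ}
    (h : (a < c ∧ a < d ∧ b < c ∧ b < d) ∨ (c < a ∧ c < b ∧ d < a ∧ d < b) ∨
      (((a < c ∧ c < b) ∨ (b < c ∧ c < a)) ∧ ((a < d ∧ d < b) ∨ (b < d ∧ d < a))) ∨
      (((c < a ∧ a < d) ∨ (d < a ∧ a < c)) ∧ ((c < b ∧ b < d) ∨ (d < b ∧ b < c)))) :
    (c < a ∧ c < b ∧ d < a ∧ d < b) ∨ (a < c ∧ a < d ∧ b < c ∧ b < d) ∨
      (((c < a ∧ a < d) ∨ (d < a ∧ a < c)) ∧ ((c < b ∧ b < d) ∨ (d < b ∧ b < c))) ∨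
      (((a < c ∧ c < b) ∨ (b < c ∧ c < a)) ∧ ((a < d ∧ d < b) ∨ (b < d ∧ d < a))) := by
  omega

set_option maxHeartbeats 1000000 in
lemma merged_sep {N n : ℕ} {p : ℕ → ℤ} (G : Good N p) (hg : Gap N p n)
    (c : ℕ) (hc1 : 1 ≤ c) (hcN : c < N) (hc2 : c ≠ n - 1) (hc3 : c ≠ n) (hc4 : c ≠ n + 1)
    (hcp : c % 2 = (n - 1) % 2) :
    (p (n-1) < p c ∧ p (n-1) < p (c+1) ∧ p (n+2) < p c ∧ p (n+2) < p (c+1)) ∨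
    (p c < p (n-1) ∧ p c < p (n+2) ∧ p (c+1) < p (n-1) ∧ p (c+1) < p (n+2)) ∨
    (((p (n-1) < p c ∧ p c < p (n+2)) ∨ (p (n+2) < p c ∧ p c < p (n-1))) ∧
      ((p (n-1) < p (c+1) ∧ p (c+1) < p (n+2)) ∨ (p (n+2) < p (c+1) ∧ p (c+1) < p (n-1)))) ∨
    (((p c < p (n-1) ∧ p (n-1) < p (c+1)) ∨ (p (c+1) < p (n-1) ∧ p (n-1) < p c)) ∧
      ((p c < p (n+2) ∧ p (n+2) < p (c+1)) ∨ (p (c+1) < p (n+2) ∧ p (n+2) < p c))) := by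
  obtain ⟨hn2, hnN, hgap⟩ := hg
  have sp1 := spans (G.mea (n-1) c (by omega) (by omega) hc1 hcN (by omega) (by omega))
  rw [show n - 1 + 1 = n by omega] at sp1
  have sp2 := spans (G.mea (n+1) c (by omega) (by omega) hc1 hcN (by omega) (by omega))
  rw [show n + 1 + 1 = n + 2 by omega] at sp2
  have g1 := hgap c (by omega) (by omega) hc3 hc4
  have g2 := hgap (c+1) (by omega) (by omega) (by omega) (by omega)
  rcases g1 with g1 | g1 <;> rcases g2 with g2 | g2 <;>
    rcases sp1 with s1 | s1 | ⟨s1a, s1b⟩ | ⟨s1a, s1b⟩ <;>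
    rcases sp2 with s2 | s2 | ⟨s2a, s2b⟩ | ⟨s2a, s2b⟩ <;>
    first
    | (exfalso; omega)
    | (refine Or.inl ?_; omega)
    | (refine Or.inr (Or.inl ?_); omega)
    | (refine Or.inr (Or.inr (Or.inl ⟨?_, ?_⟩)) <;> omega)
    | (refine Or.inr (Or.inr (Or.inr ⟨?_, ?_⟩)) <;> omega)

set_option maxHeartbeats 1000000 in
lemma good_reduced {N n : ℕ} {p : ℕ → ℤ} (G : Good N p) (hg : Gap N p n) :
    Good (N - 2) (fun t => if t < n then p t else p (t + 2)) := by
  have hn2 := hg.1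
  have hnN := hg.2.1
  constructor
  · intro a b ha1 haN hb1 hbN hab
    by_cases ha : a < n <;> by_cases hb : b < n <;>
      simp only [if_pos, if_neg, ha, hb, ite_true, ite_false] at hab
    · exact G.inj a b (by omega) (by omega) (by omega) (by omega) hab
    · have := G.inj a (b+2) (by omega) (by omega) (by omega) (by omega) hab; omega
    · have := G.inj (a+2) b (by omega) (by omega) (by omega) (by omega) hab; omega
    · have := G.inj (a+2) (b+2) (by omega) (by omega) (by omega) (by omega) hab; omega
  · intro m h1 h2
    rw [if_pos (show (1:ℕ) < n by omega), if_neg (show ¬ N - 2 < n by omega),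
      show N - 2 + 2 = N by omega]
    by_cases hm : m < n
    · rw [if_pos hm]; exact G.bnd m (by omega) (by omega)
    · rw [if_neg hm]; exact G.bnd (m+2) (by omega) (by omega)
  · intro j k hj1 hjN hk1 hkN hjk hpar
    by_cases hj : j = n - 1 <;> by_cases hk : k = n - 1
    · omega
    · -- j is the merged arc, k is an old arc
      subst hj
      rw [if_pos (show n - 1 < n by omega), show n - 1 + 1 = n by omega,
        if_neg (show ¬ n < n by omega)]
      by_cases hkc : k < n - 1
      · have e1 : (if k < n then p k else p (k+2)) = p k := if_pos (by omega)
        have e2 : (if k + 1 < n then p (k+1) else p (k+1+2)) = p (k+1) := if_pos (by omega)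
        rw [e1, e2]
        exact spans' (merged_sep G hg k (by omega) (by omega) (by omega) (by omega) (by omega) (by omega))
      · have e1 : (if k < n then p k else p (k+2)) = p (k+2) := if_neg (by omega)
        have e2 : (if k + 1 < n then p (k+1) else p (k+1+2)) = p (k+3) := by
          rw [if_neg (by omega), show k + 1 + 2 = k + 3 by omega]
        rw [e1, e2, show k + 3 = (k + 2) + 1 by omega]
        exact spans' (merged_sep G hg (k+2) (by omega) (by omega) (by omega) (by omega) (by omega) (by omega))
    · -- k is the merged arc, j is an old arc
      subst hk
      rw [if_pos (show n - 1 < n by omega), show n - 1 + 1 = n by omega,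
        if_neg (show ¬ n < n by omega)]
      by_cases hjc : j < n - 1
      · have e1 : (if j < n then p j else p (j+2)) = p j := if_pos (by omega)
        have e2 : (if j + 1 < n then p (j+1) else p (j+1+2)) = p (j+1) := if_pos (by omega)
        rw [e1, e2]
        exact spans' (plain_flip (merged_sep G hg j (by omega) (by omega) (by omega) (by omega) (by omega) (by omega)))
      · have e1 : (if j < n then p j else p (j+2)) = p (j+2) := if_neg (by omega)
        have e2 : (if j + 1 < n then p (j+1) else p (j+1+2)) = p (j+3) := by
          rw [if_neg (by omega), show j + 1 + 2 = j + 3 by omega]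
        rw [e1, e2, show j + 3 = (j + 2) + 1 by omega]
        exact spans' (plain_flip (merged_sep G hg (j+2) (by omega) (by omega) (by omega) (by omega) (by omega) (by omega)))
    · -- both old arcs
      have hmap : ∀ a, 1 ≤ a → a < N - 2 → a ≠ n - 1 →
          ∃ A, (if a < n then p a else p (a+2)) = p A ∧
            (if a + 1 < n then p (a+1) else p (a+1+2)) = p (A+1) ∧
            1 ≤ A ∧ A < N ∧ A % 2 = a % 2 ∧ (a < n - 1 → A = a) ∧ (n - 1 < a → A = a + 2) := by
        intro a ha1 haN han
        by_cases hac : a < n - 1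
        · exact ⟨a, if_pos (by omega), if_pos (by omega), by omega, by omega, by omega,
            fun _ => rfl, by omega⟩
        · refine ⟨a + 2, if_neg (by omega), ?_, by omega, by omega, by omega, by omega,
            fun _ => rfl⟩
          rw [if_neg (by omega), show a + 1 + 2 = (a + 2) + 1 by omega]
      obtain ⟨J, eJ1, eJ2, hJ1, hJN, hJp, hJl, hJr⟩ := hmap j hj1 hjN hj
      obtain ⟨K, eK1, eK2, hK1, hKN, hKp, hKl, hKr⟩ := hmap k hk1 hkN hk
      rw [eJ1, eJ2, eK1, eK2]
      exact G.mea J K hJ1 hJN hK1 hKN (by omega) (by omega)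


lemma sum_shift (f : ℕ → ℤ) (a b : ℕ) :
    ∑ m ∈ Finset.Ico (a + 2) (b + 2), f m = ∑ m ∈ Finset.Ico a b, f (m + 2) := by
  rw [Finset.sum_Ico_eq_sum_range, Finset.sum_Ico_eq_sum_range,
    show b + 2 - (a + 2) = b - a by omega]
  exact Finset.sum_congr rfl (fun i _ => by rw [show a + 2 + i = a + i + 2 by omega])

lemma sum_shift' (f : ℕ → ℤ) (a b : ℕ) (hb : 2 ≤ b) :
    ∑ m ∈ Finset.Ico (a + 2) b, f m = ∑ m ∈ Finset.Ico a (b - 2), f (m + 2) := by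
  obtain ⟨c, rfl⟩ : ∃ c, b = c + 2 := ⟨b - 2, by omega⟩
  rw [show c + 2 - 2 = c by omega]
  exact sum_shift f a c

lemma dx_shift {n : ℕ} (p : ℕ → ℤ) (q : ℤ) (m : ℕ) (hm : n ≤ m) :
    dx (fun t => if t < n then p t else p (t + 2)) q m = dx p q (m + 2) := by
  show (-1) ^ m * (Int.sign ((if m + 1 < n then p (m+1) else p (m + 1 + 2)) - q)
      - Int.sign ((if m < n then p m else p (m + 2)) - q)) = _
  rw [if_neg (by omega : ¬ m < n), if_neg (by omega : ¬ m + 1 < n),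
    show m + 1 + 2 = m + 2 + 1 by omega]
  unfold dx
  rw [show ((-1 : ℤ)) ^ (m + 2) = (-1 : ℤ) ^ m by rw [pow_add]; norm_num]

lemma dx_eq {n : ℕ} (p : ℕ → ℤ) (q : ℤ) (m : ℕ) (hm : m + 1 < n) :
    dx (fun t => if t < n then p t else p (t + 2)) q m = dx p q m := by
  show (-1) ^ m * (Int.sign ((if m + 1 < n then p (m+1) else p (m + 1 + 2)) - q)
      - Int.sign ((if m < n then p m else p (m + 2)) - q)) = _
  rw [if_pos (by omega : m < n), if_pos hm]
  rfl

lemma middle_sum {n : ℕ} (p : ℕ → ℤ) (q : ℤ) (hn : 2 ≤ n)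
    (hs : Int.sign (p n - q) = Int.sign (p (n + 1) - q)) :
    ∑ m ∈ Finset.Ico (n - 1) (n + 2), dx p q m
      = (-1) ^ (n - 1) * (Int.sign (p (n + 2) - q) - Int.sign (p (n - 1) - q)) := by
  rw [Finset.sum_eq_sum_Ico_succ_bot (by omega : n - 1 < n + 2)]
  rw [show n - 1 + 1 = n by omega]
  rw [Finset.sum_eq_sum_Ico_succ_bot (by omega : n < n + 2)]
  rw [Finset.sum_eq_sum_Ico_succ_bot (by omega : n + 1 < n + 2)]
  rw [show n + 1 + 1 = n + 2 by omega, Finset.Ico_self, Finset.sum_empty]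
  unfold dx
  rw [show n - 1 + 1 = n by omega, show n + 1 + 1 = n + 2 by omega]
  have pw1 : (-1 : ℤ) ^ n = -(-1 : ℤ) ^ (n - 1) := by
    conv_lhs => rw [show n = n - 1 + 1 by omega]
    rw [pow_succ]; ring
  have pw2 : (-1 : ℤ) ^ (n + 1) = (-1 : ℤ) ^ (n - 1) := by
    conv_lhs => rw [show n + 1 = n - 1 + 2 by omega]
    rw [pow_add]; norm_num
  rw [pw1, pw2, hs]; ring

/-- Case (a): `j + 1 ≤ n - 1`. -/
lemma removeA {N n j : ℕ} {p : ℕ → ℤ} (hn2 : 2 ≤ n) (hnN : n + 2 ≤ N)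
    (hs : Int.sign (p n - p j) = Int.sign (p (n + 1) - p j)) (hcA : j + 1 ≤ n - 1) :
    DW p N j = DW (fun t => if t < n then p t else p (t + 2)) (N - 2) j := by
  rw [DW, DW, if_pos (show j < n by omega)]
  rw [← Finset.sum_Ico_consecutive _ (show j+1 ≤ n-1 by omega) (show n-1 ≤ N by omega),
    ← Finset.sum_Ico_consecutive _ (show n-1 ≤ n+2 by omega) (show n+2 ≤ N by omega)]
  rw [← Finset.sum_Ico_consecutive _ (show j+1 ≤ n-1 by omega) (show n-1 ≤ N-2 by omega),
    ← Finset.sum_Ico_consecutive _ (show n-1 ≤ n by omega) (show n ≤ N-2 by omega)]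
  congr 1
  · exact Finset.sum_congr rfl (fun m hm => by
      rw [dx_eq p (p j) m (by simp only [Finset.mem_Ico] at hm; omega)])
  congr 1
  · -- middle part
    rw [middle_sum p (p j) hn2 hs]
    rw [Finset.sum_eq_sum_Ico_succ_bot (by omega : n - 1 < n),
      show n - 1 + 1 = n by omega, Finset.Ico_self, Finset.sum_empty, add_zero]
    show _ = (-1) ^ (n-1) * (Int.sign ((if n - 1 + 1 < n then p (n - 1 + 1) else p (n - 1 + 1 + 2)) - p j)
      - Int.sign ((if n - 1 < n then p (n-1) else p (n - 1 + 2)) - p j))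
    rw [show n - 1 + 1 = n by omega, if_neg (lt_irrefl n), if_pos (show n - 1 < n by omega),
      show n + 2 = n + 2 from rfl]
  · -- tail part
    rw [show (n : ℕ) + 2 = n + 2 from rfl, sum_shift' _ (n) N (by omega)]
    exact Finset.sum_congr rfl (fun m hm => by
      rw [dx_shift p (p j) m (by simp only [Finset.mem_Ico] at hm; omega)])

/-- Case (b): `j = n - 1`. -/
lemma removeB {N n : ℕ} {p : ℕ → ℤ} (hn2 : 2 ≤ n) (hnN : n + 2 ≤ N)
    (hs : Int.sign (p n - p (n - 1)) = Int.sign (p (n + 1) - p (n - 1))) :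
    DW p N (n - 1) = dx p (p (n - 1)) (n + 1)
      + DW (fun t => if t < n then p t else p (t + 2)) (N - 2) (n - 1) := by
  rw [DW, DW, if_pos (show n - 1 < n by omega), show n - 1 + 1 = n by omega]
  rw [Finset.sum_eq_sum_Ico_succ_bot (show n < N by omega),
      Finset.sum_eq_sum_Ico_succ_bot (show n + 1 < N by omega)]
  have h0 : dx p (p (n - 1)) n = 0 := by unfold dx; rw [hs]; ring
  rw [h0, zero_add, show n + 1 + 1 = n + 2 by omega, sum_shift' _ n N (by omega)]
  congr 1
  exact Finset.sum_congr rfl (fun m hm =>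
    (dx_shift p (p (n - 1)) m (by simp only [Finset.mem_Ico] at hm; omega)).symm)

/-- Case (c): `j ≥ n + 2`. -/
lemma removeC {N n j : ℕ} {p : ℕ → ℤ} (hn2 : 2 ≤ n) (hc : n + 2 ≤ j) (hjN : j < N) :
    DW p N j = DW (fun t => if t < n then p t else p (t + 2)) (N - 2) (j - 2) := by
  rw [DW, DW, if_neg (show ¬ j - 2 < n by omega), show j - 2 + 2 = j by omega,
    show j - 2 + 1 = j - 1 by omega]
  rw [show j + 1 = (j - 1) + 2 by omega, sum_shift' _ (j - 1) N (by omega)]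
  exact Finset.sum_congr rfl (fun m hm =>
    (dx_shift p (p j) m (by simp only [Finset.mem_Ico] at hm; omega)).symm)


set_option maxHeartbeats 1000000 in
lemma remove {N n : ℕ} {p : ℕ → ℤ} (G : Good N p) (hg : Gap N p n) (hN : Odd N) (h5 : 5 ≤ N)
    (IH : ∀ q : ℕ → ℤ, Good (N - 2) q → ∀ j, 1 ≤ j → j < N - 2 →
      DW q (N - 2) j = 2 * min (mval q j) (mval q (j + 1)))
    (j : ℕ) (hj1 : 1 ≤ j) (hjN : j < N) (h1 : j ≠ n) (h2 : j ≠ n + 1) :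
    DW p N j = 2 * min (mval p j) (mval p (j + 1)) := by
  have hn2 := hg.1
  have hnN := hg.2.1
  have G' := good_reduced G hg
  have hsj : Int.sign (p n - p j) = Int.sign (p (n + 1) - p j) := by
    rcases hg.2.2 j hj1 (by omega) h1 h2 with ⟨h, h'⟩ | ⟨h, h'⟩
    · rw [sign_pos' h, sign_pos' h']
    · rw [sign_neg' h, sign_neg' h']
  rcases Nat.lt_trichotomy j n with hc | hc | hc
  · by_cases hcA : j + 1 ≤ n - 1
    · rw [removeA hn2 hnN hsj hcA, IH _ G' j hj1 (by omega)]
      rw [mval_pres G hg j (by omega), mval_pres G hg (j + 1) (by omega),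
        if_pos (show j < n by omega), if_pos (show j + 1 < n by omega)]
    · -- j = n - 1
      have hj' : j = n - 1 := by omega
      subst hj'
      rw [removeB hn2 hnN hsj, IH _ G' (n - 1) (by omega) (by omega)]
      rw [show n - 1 + 1 = n by omega]
      rw [mval_pres G hg (n - 1) (by omega), mval_pres G hg n (by omega),
        if_pos (show n - 1 < n by omega), if_neg (lt_irrefl n)]
      -- signs α and γ
      have hne1 : p n ≠ p (n - 1) := fun hcc =>
        (by omega : n ≠ n - 1) (G.inj n (n - 1) (by omega) (by omega) (by omega) (by omega) hcc)
      have hne2 : p (n + 2) ≠ p (n - 1) := fun hcc =>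
        (by omega : n + 2 ≠ n - 1) (G.inj (n + 2) (n - 1) (by omega) (by omega) (by omega) (by omega) hcc)
      obtain ⟨α, hα, hα2⟩ : ∃ α : ℤ, (α = 1 ∨ α = -1) ∧ Int.sign (p n - p (n - 1)) = α := by
        rcases sign_cases hne1 with ⟨e, _⟩ | ⟨e, _⟩
        · exact ⟨1, Or.inl rfl, e⟩
        · exact ⟨-1, Or.inr rfl, e⟩
      obtain ⟨γ, hγ, hγ2⟩ : ∃ γ : ℤ, (γ = 1 ∨ γ = -1) ∧ Int.sign (p (n + 2) - p (n - 1)) = γ := by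
        rcases sign_cases hne2 with ⟨e, _⟩ | ⟨e, _⟩
        · exact ⟨1, Or.inl rfl, e⟩
        · exact ⟨-1, Or.inr rfl, e⟩
      have s1 := mval_succ p (show 1 ≤ n - 1 by omega)
      rw [show n - 1 + 1 = n by omega] at s1
      have E1 : mval p n = mval p (n - 1) + (-1) ^ n * α := by rw [s1, hα2]
      have E2 : mval p (n + 2) = mval p (n - 1) + (-1) ^ n * γ := by
        have k := sign_ident G hg
        have s2 := mval_succ p (show 1 ≤ n by omega)
        have s3 := mval_succ p (show 1 ≤ n + 1 by omega)
        rw [show n + 1 + 1 = n + 2 by omega] at s3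
        rw [s3, s2, s1, ← hγ2, k]
        have pw1 : (-1 : ℤ) ^ (n + 1) = -(-1 : ℤ) ^ n := by rw [pow_succ]; ring
        have pw2 : (-1 : ℤ) ^ (n + 2) = (-1 : ℤ) ^ n := by rw [pow_add]; norm_num
        rw [pw1, pw2]
        ring
      have E3 : dx p (p (n - 1)) (n + 1) = -(-1 : ℤ) ^ n * (γ - α) := by
        unfold dx
        rw [show n + 1 + 1 = n + 2 by omega, hγ2, ← hsj, hα2, pow_succ]
        ring
      rw [E1, E2, E3]
      have mi := min_ident1 (mval p (n - 1)) ((-1 : ℤ) ^ n * α) ((-1 : ℤ) ^ n * γ)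
        (pm_mul (pm_pow n) hα) (pm_mul (pm_pow n) hγ)
      linear_combination (-1 : ℤ) * mi
  · exact absurd hc h1
  · rw [removeC hn2 (by omega) hjN, IH _ G' (j - 2) (by omega) (by omega)]
    rw [show j - 2 + 1 = j - 1 by omega, mval_pres G hg (j - 2) (by omega),
      mval_pres G hg (j - 1) (by omega), if_neg (show ¬ j - 2 < n by omega),
      if_neg (show ¬ j - 1 < n by omega), show j - 2 + 2 = j by omega,
      show j - 1 + 2 = j + 1 by omega]

set_option maxHeartbeats 1000000 in
lemma nose_transfer {N j : ℕ} {p : ℕ → ℤ} (G : Good N p) (hj1 : 1 ≤ j) (hj : j + 2 ≤ N)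
    (hgap : ∀ m, 1 ≤ m → m ≤ N → m ≠ j → m ≠ j + 1 →
      (p m < p j ∧ p m < p (j + 1)) ∨ (p j < p m ∧ p (j + 1) < p m))
    (H : DW p N (j + 1) = 2 * min (mval p (j + 1)) (mval p (j + 2))) :
    DW p N j = 2 * min (mval p j) (mval p (j + 1)) := by
  have hsg : ∀ l, j + 2 ≤ l → l ≤ N → Int.sign (p l - p j) = Int.sign (p l - p (j + 1)) := by
    intro l hl1 hl2
    rcases hgap l (by omega) hl2 (by omega) (by omega) with ⟨h, h'⟩ | ⟨h, h'⟩
    · rw [sign_neg' h, sign_neg' h']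
    · rw [sign_pos' h, sign_pos' h']
  have hsum : ∑ m ∈ Finset.Ico (j + 2) N, dx p (p j) m
      = ∑ m ∈ Finset.Ico (j + 2) N, dx p (p (j + 1)) m := by
    refine Finset.sum_congr rfl (fun m hm => ?_)
    simp only [Finset.mem_Ico] at hm
    unfold dx
    rw [hsg m (by omega) (by omega), hsg (m + 1) (by omega) (by omega)]
  have hDW : DW p N j = dx p (p j) (j + 1) + DW p N (j + 1) := by
    rw [DW, DW, Finset.sum_eq_sum_Ico_succ_bot (show j + 1 < N by omega),
      show j + 1 + 1 = j + 2 by omega, hsum]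
  rw [hDW, H]
  -- signs
  have hne1 : p (j + 1) ≠ p j := fun hcc =>
    (by omega : j + 1 ≠ j) (G.inj (j + 1) j (by omega) (by omega) (by omega) (by omega) hcc)
  have hne2 : p (j + 2) ≠ p (j + 1) := fun hcc =>
    (by omega : j + 2 ≠ j + 1) (G.inj (j + 2) (j + 1) (by omega) (by omega) (by omega) (by omega) hcc)
  obtain ⟨δ, hδ, hδ2⟩ : ∃ δ : ℤ, (δ = 1 ∨ δ = -1) ∧ Int.sign (p (j + 1) - p j) = δ := by
    rcases sign_cases hne1 with ⟨e, _⟩ | ⟨e, _⟩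
    · exact ⟨1, Or.inl rfl, e⟩
    · exact ⟨-1, Or.inr rfl, e⟩
  obtain ⟨β, hβ, hβ2⟩ : ∃ β : ℤ, (β = 1 ∨ β = -1) ∧ Int.sign (p (j + 2) - p (j + 1)) = β := by
    rcases sign_cases hne2 with ⟨e, _⟩ | ⟨e, _⟩
    · exact ⟨1, Or.inl rfl, e⟩
    · exact ⟨-1, Or.inr rfl, e⟩
  have hβ' : Int.sign (p (j + 2) - p j) = β := by
    rw [hsg (j + 2) (by omega) (by omega), hβ2]
  have E0 : dx p (p j) (j + 1) = (-1 : ℤ) ^ (j + 1) * (β - δ) := by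
    unfold dx
    rw [show j + 1 + 1 = j + 2 by omega, hβ', hδ2]
  have E1 : mval p (j + 1) = mval p j + (-1) ^ (j + 1) * δ := by
    rw [mval_succ p hj1, hδ2]
  have E2 : mval p (j + 2) = mval p j + (-1) ^ (j + 1) * δ - (-1) ^ (j + 1) * β := by
    have s2 := mval_succ p (show 1 ≤ j + 1 by omega)
    rw [show j + 1 + 1 = j + 2 by omega] at s2
    rw [s2, hβ2, ← E1, pow_succ]
    ring
  rw [E0, E1, E2]
  have mi := min_ident2 (mval p j) ((-1 : ℤ) ^ (j + 1) * δ) ((-1 : ℤ) ^ (j + 1) * β)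
    (pm_mul (pm_pow (j + 1)) hδ) (pm_mul (pm_pow (j + 1)) hβ)
  linear_combination (-1 : ℤ) * mi

set_option maxHeartbeats 1000000 in
theorem key : ∀ N, Odd N → ∀ p : ℕ → ℤ, Good N p → ∀ j, 1 ≤ j → j < N →
    DW p N j = 2 * min (mval p j) (mval p (j + 1)) := by
  intro N
  induction N using Nat.strong_induction_on with
  | _ N IH =>
    intro hN p G j hj1 hjN
    by_cases h5 : N < 5
    · rcases (by obtain ⟨t, ht⟩ := hN; omega : N = 1 ∨ N = 3) with rfl | rfl
      · omega
      · have hb' : p 1 < p 2 ∧ p 2 < p 3 := G.bnd 2 (by omega) (by omega)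
        have h1v : mval p 1 = 0 := rfl
        have h12 : mval p 2 = 1 := by
          have h := mval_succ p (le_refl 1)
          norm_num at h
          rw [h, sign_pos' hb'.1, h1v]
          norm_num
        have h13 : mval p 3 = 0 := by
          have h := mval_succ p (show 1 ≤ 2 by omega)
          norm_num at h
          rw [h, sign_pos' hb'.2, h12]
          norm_num
        rcases (by omega : j = 1 ∨ j = 2) with rfl | rfl
        · have hDW : DW p 3 1 = dx p (p 1) 2 := by
            rw [DW, show (1:ℕ) + 1 = 2 from by norm_num, Finset.sum_Ico_eq_sum_range,
              show (3:ℕ) - 2 = 1 from by norm_num, Finset.sum_range_one]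
          rw [hDW, show (1:ℕ) + 1 = 2 from by norm_num, h12, h1v]
          unfold dx
          rw [show (2:ℕ) + 1 = 3 from by norm_num, sign_pos' hb'.1,
            sign_pos' (lt_trans hb'.1 hb'.2)]
          norm_num
        · rw [DW, show (2:ℕ) + 1 = 3 from by norm_num, Finset.Ico_self, Finset.sum_empty,
            h13, h12]
          norm_num
    · -- N ≥ 5
      have hodd2 : Odd (N - 2) := by obtain ⟨t, ht⟩ := hN; exact ⟨t - 1, by omega⟩
      have IH2 : ∀ q : ℕ → ℤ, Good (N - 2) q → ∀ j', 1 ≤ j' → j' < N - 2 →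
          DW q (N - 2) j' = 2 * min (mval q j') (mval q (j' + 1)) :=
        fun q Gq => IH (N - 2) (by omega) hodd2 q Gq
      obtain ⟨nO, hgO, hpO⟩ := exists_gap G hN (by omega) 1 (Or.inr rfl)
      obtain ⟨nE, hgE, hpE⟩ := exists_gap G hN (by omega) 0 (Or.inl rfl)
      by_cases hO : j ≠ nO ∧ j ≠ nO + 1
      · exact remove G hgO hN (by omega) IH2 j hj1 hjN hO.1 hO.2
      by_cases hE : j ≠ nE ∧ j ≠ nE + 1
      · exact remove G hgE hN (by omega) IH2 j hj1 hjN hE.1 hE.2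
      · -- arcs j and j - 1 are both noses
        have hgj : Gap N p j := by
          rcases (by omega : j = nO ∨ j = nE) with rfl | rfl
          · exact hgO
          · exact hgE
        have hgprev : Gap N p (j - 1) := by
          rcases (by omega : j - 1 = nO ∨ j - 1 = nE) with h | h
          · rw [h]; exact hgO
          · rw [h]; exact hgE
        have hstep : DW p N (j + 1) = 2 * min (mval p (j + 1)) (mval p (j + 2)) := by
          have hr := remove G hgprev hN (by omega) IH2 (j + 1) (by omega)
            (by have := hgj.2.1; omega) (by omega) (by omega)
          rw [hr, show j + 1 + 1 = j + 2 by omega]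
        exact nose_transfer G hj1 hgj.2.1 hgj.2.2 hstep


end SturmNSL

namespace SturmNSL

section Bridge

variable {N : ℕ} {σ : Equiv.Perm ℕ}

lemma pos_inj (σ : Equiv.Perm ℕ) {a b : ℕ} (h : pos σ a = pos σ b) : a = b := by
  have : σ.symm a = σ.symm b := by unfold pos at h; exact_mod_cast h
  exact σ.symm.injective this

lemma pos_ne (σ : Equiv.Perm ℕ) {a b : ℕ} (h : a ≠ b) : pos σ a ≠ pos σ b :=
  fun hc => h (pos_inj σ hc)

lemma symm_mem (hS : IsSturm N σ) {m : ℕ} (h1 : 1 ≤ m) (h2 : m ≤ N) :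
    1 ≤ σ.symm m ∧ σ.symm m ≤ N := by
  by_contra hc
  have hout : σ.symm m = 0 ∨ N < σ.symm m := by omega
  have := hS.fix_outside (σ.symm m) hout
  rw [Equiv.apply_symm_apply] at this
  omega

lemma symm_one (hS : IsSturm N σ) : σ.symm 1 = 1 := by
  have := hS.dissip_one
  exact (Equiv.symm_apply_eq σ).mpr this.symm

lemma symm_N (hS : IsSturm N σ) : σ.symm N = N := by
  have := hS.dissip_N
  exact (Equiv.symm_apply_eq σ).mpr this.symm

lemma good_of_sturm (hS : IsSturm N σ) : Good N (pos σ) := by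
  constructor
  · intro a b _ _ _ _ h
    exact pos_inj σ h
  · intro m h1 h2
    have hm := symm_mem hS (by omega : 1 ≤ m) (by omega : m ≤ N)
    have e1 := symm_one hS
    have eN := symm_N hS
    have hne1 : σ.symm m ≠ 1 := by
      intro hc
      have : m = σ 1 := by rw [← hc, Equiv.apply_symm_apply]
      rw [hS.dissip_one] at this; omega
    have hneN : σ.symm m ≠ N := by
      intro hc
      have : m = σ N := by rw [← hc, Equiv.apply_symm_apply]
      rw [hS.dissip_N] at this; omega
    unfold pos
    rw [e1, eN]
    constructor
    · exact_mod_cast (show 1 < σ.symm m by omega)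
    · exact_mod_cast (show σ.symm m < N by omega)
  · intro j k hj1 hjN hk1 hkN hjk hpar
    have := hS.meander j k hj1 hjN hk1 hkN hjk hpar
    unfold arcLo arcHi at this
    unfold pos
    rcases this with h | h | h | h
    · left; exact_mod_cast h
    · right; left; exact_mod_cast h
    · right; right; left
      exact ⟨by exact_mod_cast h.1, by exact_mod_cast h.2⟩
    · right; right; right
      exact ⟨by exact_mod_cast h.1, by exact_mod_cast h.2⟩

lemma morse_eq_mval (σ : Equiv.Perm ℕ) : ∀ n, morse σ n = mval (pos σ) n
  | 0 => rfl
  | 1 => rfl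
  | (n + 2) => by rw [morse, mval, morse_eq_mval σ (n + 1)]

lemma dx_double (σ : Equiv.Perm ℕ) {j m : ℕ} (hm : m ≠ j) (hm1 : m + 1 ≠ j) :
    2 * (((-1 : ℤ) ^ m *
      (Int.sign (pos σ (m + 1) - pos σ j) - Int.sign (pos σ m - pos σ j))) / 2)
      = dx (pos σ) (pos σ j) m := by
  unfold dx
  rcases sign_cases (pos_ne σ hm1) with ⟨e1, _⟩ | ⟨e1, _⟩ <;>
    rcases sign_cases (pos_ne σ hm) with ⟨e0, _⟩ | ⟨e0, _⟩ <;>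
      rw [e1, e0] <;>
        rcases pm_pow m with e | e <;> rw [e] <;> norm_num

lemma zn2 (σ : Equiv.Perm ℕ) (N j : ℕ) :
    ∀ k, j < k → 2 * znRec σ N j k = ∑ m ∈ Finset.Ico k N, dx (pos σ) (pos σ j) m := by
  intro k hk
  rw [znRec]
  by_cases h : N ≤ k
  · rw [dif_pos h, Finset.Ico_eq_empty (by omega)]
    simp
  · rw [dif_neg h, mul_add, zn2 σ N j (k + 1) (by omega),
      Finset.sum_eq_sum_Ico_succ_bot (by omega : k < N)]
    rw [dx_double σ (by omega : k ≠ j) (by omega : k + 1 ≠ j)]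
    ring
termination_by k => N - k
decreasing_by omega

lemma cross2 (σ : Equiv.Perm ℕ) (j k : ℕ) (hjk : j ≤ k) :
    2 * cross σ j k j = - ∑ m ∈ Finset.Ico (j + 1) k, dx (pos σ) (pos σ j) m := by
  unfold cross
  rcases eq_or_lt_of_le hjk with rfl | hlt
  · rw [Finset.Ico_self]
    rw [Finset.Ico_eq_empty (by omega)]
    simp
  · rw [Finset.sum_eq_sum_Ico_succ_bot (by omega : j < k), mul_add]
    have h0 : cross1 σ j j = 0 := by unfold cross1; rw [if_pos (Or.inl rfl)]
    rw [h0, Finset.mul_sum, ← Finset.sum_neg_distrib]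
    rw [mul_zero, zero_add]
    refine Finset.sum_congr rfl (fun m hm => ?_)
    simp only [Finset.mem_Ico] at hm
    have hmj : ¬ (j = m ∨ j = m + 1) := by omega
    unfold cross1
    rw [if_neg hmj]
    have := dx_double σ (show m ≠ j by omega) (show m + 1 ≠ j by omega)
    unfold dx at this ⊢
    have e2 : (-1 : ℤ) ^ (m + 1) = -(-1 : ℤ) ^ m := by rw [pow_succ]; ring
    rw [e2, neg_mul]
    omega

end Bridge
end SturmNSL


/-- **Nonlinear Sturm–Liouville property** (equation (204)).  For `1 ≤ j < k ≤ N`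
one has `|i_{j+1} - i_j| = 1`, and `z_{j,k} = i_j + c(j,k;j)` if `i_{j+1} = i_j + 1`
(odd quadrant), `z_{j,k} = i_j - 1 + c(j,k;j)` if `i_{j+1} = i_j - 1` (even
quadrant); equivalently `z_{j,k} = min(i_j, i_{j+1}) + c(j,k;j)`. -/
theorem nonlinear_sturm_liouville
    (N : ℕ) (σ : Equiv.Perm ℕ) (hS : IsSturm N σ)
    (j k : ℕ) (hj : 1 ≤ j) (hjk : j < k) (hkN : k ≤ N) :
    |morse σ (j + 1) - morse σ j| = 1 ∧
    (morse σ (j + 1) = morse σ j + 1 →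
      znum σ N j k = morse σ j + cross σ j k j) ∧
    (morse σ (j + 1) = morse σ j - 1 →
      znum σ N j k = morse σ j - 1 + cross σ j k j) ∧
    znum σ N j k = min (morse σ j) (morse σ (j + 1)) + cross σ j k j := by
  have hjN : j < N := lt_of_lt_of_le hjk hkN
  have G := SturmNSL.good_of_sturm hS
  have hd : morse σ (j + 1) - morse σ j = 1 ∨ morse σ (j + 1) - morse σ j = -1 := by
    have hm := SturmNSL.mval_succ (pos σ) hj
    rw [← SturmNSL.morse_eq_mval, ← SturmNSL.morse_eq_mval] at hm
    rcases SturmNSL.sign_cases (SturmNSL.pos_ne σ (show j + 1 ≠ j by omega)) with ⟨e, _⟩ | ⟨e, _⟩ <;>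
      rcases SturmNSL.pm_pow (j + 1) with e2 | e2 <;> rw [e, e2] at hm <;> omega
  have part1 : |morse σ (j + 1) - morse σ j| = 1 := by
    rcases hd with h | h <;> rw [h] <;> norm_num
  have hkey := SturmNSL.key N hS.odd_N (pos σ) G j hj hjN
  rw [← SturmNSL.morse_eq_mval, ← SturmNSL.morse_eq_mval] at hkey
  have hzn1 : 2 * znRec σ N j (j + 1) = SturmNSL.DW (pos σ) N j :=
    SturmNSL.zn2 σ N j (j + 1) (by omega)
  have hznk : 2 * znRec σ N j k = ∑ m ∈ Finset.Ico k N, SturmNSL.dx (pos σ) (pos σ j) m :=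
    SturmNSL.zn2 σ N j k hjk
  have hcr : 2 * cross σ j k j = - ∑ m ∈ Finset.Ico (j + 1) k, SturmNSL.dx (pos σ) (pos σ j) m :=
    SturmNSL.cross2 σ j k (le_of_lt hjk)
  have hsplit : ∑ m ∈ Finset.Ico (j + 1) k, SturmNSL.dx (pos σ) (pos σ j) m
      + ∑ m ∈ Finset.Ico k N, SturmNSL.dx (pos σ) (pos σ j) m
      = ∑ m ∈ Finset.Ico (j + 1) N, SturmNSL.dx (pos σ) (pos σ j) m :=
    Finset.sum_Ico_consecutive _ (by omega) hkN
  have hDWsum : SturmNSL.DW (pos σ) N j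
      = ∑ m ∈ Finset.Ico (j + 1) N, SturmNSL.dx (pos σ) (pos σ j) m := rfl
  have hmineq : znum σ N j k = min (morse σ j) (morse σ (j + 1)) + cross σ j k j := by
    have h2 : (2 : ℤ) ≠ 0 := two_ne_zero
    apply mul_left_cancel₀ h2
    rw [znum, if_pos (le_of_lt hjk)]
    rw [hDWsum] at hkey
    linarith [hznk, hcr, hsplit, hkey]
  refine ⟨part1, ?_, ?_, hmineq⟩
  · intro h
    rw [hmineq, h, min_eq_left (by omega)]
  · intro h
    rw [hmineq, h, min_eq_right (by omega)]
end

section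
/- (Equations (310)–(312)) Let σ be a Sturm permutation of {1,…,N} and let j0 < j1 < j2 ≤ N be labels with σ⁻¹(j1) = σ⁻¹(j0) + 1 (the positions of j0 and j1 are adjacent on the horizontal axis) and with i_{j1} even. Then the crossing numbers satisfy: c(j1,j2;j1) = c(j1,j2;j0) if σ⁻¹(j1+1) > σ⁻¹(j1) (the arc from j1 to j1+1 lies in an odd quadrant with respect to j1), and c(j1,j2;j1) = c(j1,j2;j0) + 1 if σ⁻¹(j1+1) < σ⁻¹(j1) (even quadrant). -/
/-! The positions of `j0` and `j1` are adjacent, so no other label lies between them and every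
step of the meander after `j1` crosses the vertical lines through `j0` and `j1` in the same way.
Only the step from `j1` to `j1 + 1` can differ: it never counts at `j1`, and it crosses the line
at `j0` exactly when `j1 + 1` lies to the left, with sign `(-1) ^ j1`. The Morse index changes
parity at every step, so `i_{j1}` even forces `j1` odd and that sign is `-1`. -/

open Finset

lemma Int.sign_sub_succ_eq {x p : ℤ} (h₀ : x ≠ p) (h₁ : x ≠ p + 1) :
    Int.sign (x - (p + 1)) = Int.sign (x - p) := by
  rcases lt_or_gt_of_ne h₀ with h | h
  · rw [Int.sign_eq_neg_one_of_neg (by omega), Int.sign_eq_neg_one_of_neg (by omega)]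
  · rw [Int.sign_eq_one_of_pos (by omega), Int.sign_eq_one_of_pos (by omega)]

section
variable (σ : Equiv.Perm ℕ)

lemma pos_injective : Function.Injective (pos σ) := fun _ _ h =>
  σ.symm.injective (Nat.cast_injective h)

lemma odd_morse_add_two_sub (j : ℕ) : Odd (morse σ (j + 2) - morse σ (j + 1)) := by
  have hne : pos σ (j + 2) - pos σ (j + 1) ≠ 0 :=
    sub_ne_zero.mpr fun h => by simpa using pos_injective σ h
  rw [morse, add_sub_cancel_left]
  exact odd_neg_one.pow.mul
    (Int.natAbs_odd.mp (by rw [Int.natAbs_sign_of_ne_zero hne]; exact odd_one))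

lemma even_morse_iff_odd {j : ℕ} (hj : 1 ≤ j) : Even (morse σ j) ↔ Odd j := by
  induction j, hj using Nat.le_induction with
  | base => simp [morse]
  | succ n hn ih =>
    obtain ⟨k, rfl⟩ : ∃ k, n = k + 1 := ⟨n - 1, by omega⟩
    have hstep := odd_morse_add_two_sub σ k
    rw [← sub_add_cancel (morse σ (k + 2)) (morse σ (k + 1)), Int.even_add, ih,
      Nat.odd_add_one (n := k + 1)]
    have := Int.not_even_iff_odd.mpr hstep
    tauto

lemma cross1_self (k : ℕ) : cross1 σ k k = 0 := by
  simp [cross1]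

lemma cross_eq_cross1_add {j k : ℕ} (ℓ : ℕ) (h : j < k) :
    cross σ j k ℓ = cross1 σ j ℓ + cross σ (j + 1) k ℓ :=
  sum_eq_sum_Ico_succ_bot h _

variable {σ}

lemma pos_eq_of_symm_eq_succ {a b : ℕ} (hab : σ.symm b = σ.symm a + 1) :
    pos σ b = pos σ a + 1 := by
  simp [pos, hab]

lemma sign_pos_sub_eq_of_symm_eq_succ {a b x : ℕ} (hab : σ.symm b = σ.symm a + 1)
    (ha : x ≠ a) (hb : x ≠ b) :
    Int.sign (pos σ x - pos σ b) = Int.sign (pos σ x - pos σ a) := by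
  have hpos := pos_eq_of_symm_eq_succ hab
  rw [hpos]
  exact Int.sign_sub_succ_eq ((pos_injective σ).ne ha) (hpos ▸ (pos_injective σ).ne hb)

lemma cross1_eq_of_symm_eq_succ {a b m : ℕ} (hab : σ.symm b = σ.symm a + 1)
    (ha : a < m) (hb : b < m) : cross1 σ m b = cross1 σ m a := by
  simp only [cross1, if_neg (show ¬(a = m ∨ a = m + 1) by omega),
    if_neg (show ¬(b = m ∨ b = m + 1) by omega),
    sign_pos_sub_eq_of_symm_eq_succ hab (x := m) (by omega) (by omega),
    sign_pos_sub_eq_of_symm_eq_succ hab (x := m + 1) (by omega) (by omega)]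

lemma cross_eq_of_symm_eq_succ {a b j k : ℕ} (hab : σ.symm b = σ.symm a + 1)
    (ha : a < j) (hb : b < j) : cross σ j k b = cross σ j k a :=
  sum_congr rfl fun m hm =>
    cross1_eq_of_symm_eq_succ hab (by grind) (by grind)

lemma cross1_eq_zero_of_symm_lt {a k : ℕ} (hak : σ.symm k = σ.symm a + 1) (ha : a < k)
    (h : σ.symm k < σ.symm (k + 1)) : cross1 σ k a = 0 := by
  have hpos := pos_eq_of_symm_eq_succ hak
  have hnext : pos σ k < pos σ (k + 1) := by simpa [pos] using h
  rw [cross1, if_neg (by omega), hpos, Int.sign_eq_one_of_pos (by omega),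
    Int.sign_eq_one_of_pos (by omega)]
  simp

lemma cross1_eq_neg_one_pow_of_symm_lt {a k : ℕ} (hak : σ.symm k = σ.symm a + 1) (ha : a < k)
    (h : σ.symm (k + 1) < σ.symm k) : cross1 σ k a = (-1) ^ k := by
  have hpos := pos_eq_of_symm_eq_succ hak
  have hnext : pos σ (k + 1) < pos σ a := by
    have : pos σ (k + 1) ≠ pos σ a := (pos_injective σ).ne (by omega)
    have : pos σ (k + 1) < pos σ k := by simpa [pos] using h
    omega
  rw [cross1, if_neg (by omega), hpos, Int.sign_eq_neg_one_of_neg (by omega),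
    Int.sign_eq_one_of_pos (by omega), pow_succ]
  omega

end

theorem crossing_number_shift_general
    (σ : Equiv.Perm ℕ)
    (j0 j1 j2 : ℕ) (h01 : j0 < j1) (h12 : j1 < j2)
    (hadj : σ.symm j1 = σ.symm j0 + 1)
    (heven : Even (morse σ j1)) :
    (σ.symm j1 < σ.symm (j1 + 1) → cross σ j1 j2 j1 = cross σ j1 j2 j0) ∧
    (σ.symm (j1 + 1) < σ.symm j1 → cross σ j1 j2 j1 = cross σ j1 j2 j0 + 1) := by
  have hodd : Odd j1 := (even_morse_iff_odd σ (by omega)).mp heven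
  have htail : cross σ (j1 + 1) j2 j1 = cross σ (j1 + 1) j2 j0 :=
    cross_eq_of_symm_eq_succ hadj (by omega) (by omega)
  simp only [cross_eq_cross1_add σ _ h12, cross1_self, htail]
  constructor
  · intro h
    rw [cross1_eq_zero_of_symm_lt hadj h01 h]
  · intro h
    rw [cross1_eq_neg_one_pow_of_symm_lt hadj h01 h, hodd.neg_one_pow]
    ring

/-- **Equations (310)–(312).**  If the positions of `j0` and `j1` are adjacent on
the horizontal axis (`σ⁻¹ j1 = σ⁻¹ j0 + 1`) and `i_{j1}` is even, then
`c(j1,j2;j1) = c(j1,j2;j0)` when the arc from `j1` to `j1+1` lies in an odd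
quadrant with respect to `j1` (`σ⁻¹(j1+1) > σ⁻¹(j1)`), and
`c(j1,j2;j1) = c(j1,j2;j0) + 1` in the even-quadrant case (`σ⁻¹(j1+1) < σ⁻¹(j1)`). -/
theorem crossing_number_shift
    (N : ℕ) (σ : Equiv.Perm ℕ) (hS : IsSturm N σ)
    (j0 j1 j2 : ℕ) (hj01 : 1 ≤ j0) (h01 : j0 < j1) (h12 : j1 < j2) (hj2N : j2 ≤ N)
    (hadj : σ.symm j1 = σ.symm j0 + 1)
    (heven : Even (morse σ j1)) :
    (σ.symm j1 < σ.symm (j1 + 1) → cross σ j1 j2 j1 = cross σ j1 j2 j0) ∧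
    (σ.symm (j1 + 1) < σ.symm j1 → cross σ j1 j2 j1 = cross σ j1 j2 j0 + 1) :=
  crossing_number_shift_general σ j0 j1 j2 h01 h12 hadj heven
end

section
/- (Zero number parity determines the boundary order at x = 1) Let σ be a Sturm permutation of {1,…,N} and 1 ≤ j < k ≤ N. Then σ⁻¹(k) > σ⁻¹(j) if and only if z_{j,k} is even; that is, sign(σ⁻¹(k) − σ⁻¹(j)) = (−1)^{z_{j,k}}. (The order of two equilibria at the boundary x = 1 agrees with their order at x = 0 exactly when their zero number is even, and is reversed exactly when it is odd.) -/
lemma sturm_symm_le (N : ℕ) (σ : Equiv.Perm ℕ) (hS : IsSturm N σ) {m : ℕ} (hm : m ≤ N) :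
    σ.symm m ≤ N := by
  by_contra h
  push_neg at h
  have h2 := hS.fix_outside (σ.symm m) (Or.inr h)
  rw [Equiv.apply_symm_apply] at h2
  omega

lemma sturm_symm_N (N : ℕ) (σ : Equiv.Perm ℕ) (hS : IsSturm N σ) : σ.symm N = N := by
  conv_lhs => rw [← hS.dissip_N]
  exact σ.symm_apply_apply N

lemma sign_pos_sub (σ : Equiv.Perm ℕ) {j m : ℕ} (h : σ.symm m ≠ σ.symm j) :
    Int.sign (pos σ m - pos σ j) = if σ.symm j < σ.symm m then 1 else -1 := by
  unfold pos
  split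
  · exact Int.sign_eq_one_of_pos (by omega)
  · next hn => exact Int.sign_eq_neg_one_of_neg (by omega)

lemma znRec_key (N : ℕ) (σ : Equiv.Perm ℕ) (hS : IsSturm N σ)
    (j : ℕ) (hj : 1 ≤ j) :
    ∀ n k, N - k = n → j < k → k ≤ N →
      (Even (znRec σ N j k) ↔ σ.symm j < σ.symm k) := by
  have hsymm_ne : ∀ {a b : ℕ}, a ≠ b → σ.symm a ≠ σ.symm b := by
    intro a b hab hc
    exact hab (σ.symm.injective hc)
  intro n
  induction n with
  | zero =>
    intro k hk hjk hkN
    have hkN' : k = N := by omega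
    rw [znRec, dif_pos (by omega)]
    have h1 : σ.symm j ≤ N := sturm_symm_le N σ hS (by omega)
    have h2 : σ.symm j ≠ N := by
      intro h
      exact hsymm_ne (show j ≠ N by omega) (by rw [h, sturm_symm_N N σ hS])
    rw [hkN', sturm_symm_N N σ hS]
    simp only [Even.zero, true_iff]
    omega
  | succ n ih =>
    intro k hk hjk hkN
    have hkN' : k < N := by omega
    rw [znRec, dif_neg (by omega)]
    have IH := ih (k + 1) (by omega) (by omega) (by omega)
    have hne1 : σ.symm k ≠ σ.symm j := hsymm_ne (by omega)
    have hne2 : σ.symm (k + 1) ≠ σ.symm j := hsymm_ne (by omega)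
    have hT : ∀ m : ℕ, ¬ Even (-(-1 : ℤ) ^ m) ∧ ¬ Even ((-1 : ℤ) ^ m) := by
      intro m
      rcases Nat.even_or_odd m with he | ho
      · rw [he.neg_one_pow]; exact ⟨by decide, by decide⟩
      · rw [ho.neg_one_pow]; exact ⟨by decide, by decide⟩
    rw [sign_pos_sub σ hne1, sign_pos_sub σ hne2]
    rcases lt_or_gt_of_ne hne1 with hP | hP <;>
    rcases lt_or_gt_of_ne hne2 with hQ | hQ
    · rw [if_neg (by omega), if_neg (by omega)]
      simp only [sub_self, mul_zero, Int.zero_ediv, add_zero]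
      rw [IH]; omega
    · rw [if_pos hQ, if_neg (by omega)]
      have ht : ((-1 : ℤ) ^ k * (1 - -1)) / 2 = (-1) ^ k := by ring_nf; omega
      rw [ht, Int.even_add, IH, iff_false_intro (hT k).2]
      simp only [iff_false]
      omega
    · rw [if_neg (by omega), if_pos hP]
      have ht : ((-1 : ℤ) ^ k * (-1 - 1)) / 2 = -(-1) ^ k := by ring_nf; omega
      rw [ht, Int.even_add, IH, iff_false_intro (hT k).1]
      simp only [iff_false]
      omega
    · rw [if_pos hQ, if_pos hP]
      simp only [sub_self, mul_zero, Int.zero_ediv, add_zero]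
      rw [IH]; omega


/-- **Zero number parity determines the boundary order at `x = 1`.**  For labels
`j < k` of a Sturm permutation: `σ⁻¹(k) > σ⁻¹(j)` if and only if `z_{j,k}` is even. -/
theorem boundary_order_zero_parity
    (N : ℕ) (σ : Equiv.Perm ℕ) (hS : IsSturm N σ)
    (j k : ℕ) (hj : 1 ≤ j) (hjk : j < k) (hkN : k ≤ N) :
    σ.symm j < σ.symm k ↔ Even (znum σ N j k) := by
  rw [znum, if_pos hjk.le]
  exact (znRec_key N σ hS j hj (N - k) k rfl hjk hkN).symm
end

section
/- (Lemma 6.1, zero number part) Let σ be a Sturm permutation of {1,…,N} and σ̃ its suspension. Then the zero numbers of σ̃ satisfy: z̃_{j,k} = z_{j,k} + 1 for all 1 ≤ j < k ≤ N; z̃_{0,j} = 0 for all 1 ≤ j ≤ N+1; and z̃_{k,N+1} = 0 for all 0 ≤ k ≤ N. -/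
/-- **Lemma 6.1, zero number part.**  The zero numbers of the suspension `σ̃`
satisfy `z̃_{j,k} = z_{j,k} + 1` for `1 ≤ j < k ≤ N`, `z̃_{0,j} = 0` for
`1 ≤ j ≤ N+1`, and `z̃_{k,N+1} = 0` for `0 ≤ k ≤ N`. -/
theorem suspension_zero_numbers
    (N : ℕ) (σ σt : Equiv.Perm ℕ) (hS : IsSturm N σ)
    (h0 : σt 0 = 0) (hN1 : σt (N + 1) = N + 1)
    (hmid : ∀ j, 1 ≤ j → j ≤ N → σt j = σ (N + 1 - j))
    (hout : ∀ j, N + 1 < j → σt j = j) :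
    (∀ j k, 1 ≤ j → j < k → k ≤ N →
      znumT σt (N + 1) j k = znum σ N j k + 1) ∧
    (∀ j, 1 ≤ j → j ≤ N + 1 → znumT σt (N + 1) 0 j = 0) ∧
    (∀ k, k ≤ N → znumT σt (N + 1) k (N + 1) = 0) := by
  -- basic facts about σ
  have hinv : ∀ m, 1 ≤ m → m ≤ N → 1 ≤ σ.symm m ∧ σ.symm m ≤ N := by
    intro m h1 h2
    by_contra h
    have hout' : σ.symm m = 0 ∨ N < σ.symm m := by omega
    have := hS.fix_outside (σ.symm m) hout'
    rw [Equiv.apply_symm_apply] at this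
    omega
  have hsymmN : σ.symm N = N := by
    conv_lhs => rw [← hS.dissip_N]
    exact Equiv.symm_apply_apply σ N
  have hposT : ∀ m, 1 ≤ m → m ≤ N → pos σt m = (N : ℤ) + 1 - pos σ m := by
    intro m h1 h2
    obtain ⟨ha1, ha2⟩ := hinv m h1 h2
    have key : σt (N + 1 - σ.symm m) = m := by
      rw [hmid _ (by omega) (by omega)]
      have h3 : N + 1 - (N + 1 - σ.symm m) = σ.symm m := by omega
      rw [h3, Equiv.apply_symm_apply]
    have h4 : σt.symm m = N + 1 - σ.symm m := by
      have h5 := Equiv.symm_apply_apply σt (N + 1 - σ.symm m)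
      rw [key] at h5
      exact h5
    unfold pos
    rw [h4]
    omega
  have hposT0 : pos σt 0 = 0 := by
    have h := Equiv.symm_apply_apply σt 0
    rw [h0] at h
    unfold pos; rw [h]; rfl
  have hposTN1 : pos σt (N + 1) = (N : ℤ) + 1 := by
    have h := Equiv.symm_apply_apply σt (N + 1)
    rw [hN1] at h
    unfold pos; rw [h]; push_cast; ring
  have hpσ : ∀ m, 1 ≤ m → m ≤ N → 1 ≤ pos σ m ∧ pos σ m ≤ N := by
    intro m h1 h2
    obtain ⟨a, b⟩ := hinv m h1 h2
    unfold pos; omega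
  have hposTpos : ∀ m, 1 ≤ m → m ≤ N + 1 → 0 < pos σt m := by
    intro m h1 h2
    rcases Nat.lt_or_ge m (N + 1) with h | h
    · rw [hposT m h1 (by omega)]
      have := hpσ m h1 (by omega); omega
    · have hm : m = N + 1 := by omega
      rw [hm, hposTN1]; positivity
  refine ⟨?_, ?_, ?_⟩
  · -- main part
    have key : ∀ d m, 1 ≤ m → m + d = N → ∀ j, 1 ≤ j → j < N →
        znRecT σt (N + 1) j m = znRec σ N j m + 1 := by
      intro d
      induction d with
      | zero =>
        intro m h1 hm j hj1 hj2
        have hmN : m = N := by omega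
        rw [hmN]
        have hb1 : 1 ≤ pos σ j ∧ pos σ j ≤ N := hpσ j hj1 (by omega)
        have hjne : σ.symm j ≠ N := by
          intro h
          have := congrArg σ h
          rw [Equiv.apply_symm_apply, hS.dissip_N] at this
          omega
        have hb2 : pos σ j ≤ (N : ℤ) - 1 := by
          have h6 := (hinv j hj1 (by omega)).2
          unfold pos; omega
        rw [znRec, dif_pos (le_refl N)]
        rw [znRecT, dif_neg (by omega : ¬ N + 1 ≤ N)]
        rw [znRecT, dif_pos (le_refl (N + 1))]
        have hs1 : Int.sign (pos σt (N + 1) - pos σt j) = 1 := by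
          rw [Int.sign_eq_one_iff_pos, hposTN1, hposT j hj1 (by omega)]
          omega
        have hs2 : Int.sign (pos σt N - pos σt j) = -1 := by
          rw [Int.sign_eq_neg_one_iff_neg, hposT N hS.one_le (le_refl N),
            hposT j hj1 (by omega)]
          have hpN : pos σ N = (N : ℤ) := by unfold pos; rw [hsymmN]
          rw [hpN]
          omega
        have hpow : (-1 : ℤ) ^ (N + 1) = 1 := (hS.odd_N.add_one).neg_one_pow
        rw [hs1, hs2, hpow]
        norm_num
      | succ d ih =>
        intro m h1 hm j hj1 hj2
        have hmN : m < N := by omega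
        rw [znRec, dif_neg (by omega : ¬ N ≤ m)]
        rw [znRecT, dif_neg (by omega : ¬ N + 1 ≤ m)]
        rw [ih (m + 1) (by omega) (by omega) j hj1 hj2]
        have e1 : pos σt (m + 1) - pos σt j = -(pos σ (m + 1) - pos σ j) := by
          rw [hposT (m + 1) (by omega) (by omega), hposT j hj1 (by omega)]; ring
        have e2 : pos σt m - pos σt j = -(pos σ m - pos σ j) := by
          rw [hposT m h1 (by omega), hposT j hj1 (by omega)]; ring
        rw [e1, e2, Int.sign_neg, Int.sign_neg]
        have e3 : (-1 : ℤ) ^ (m + 1) *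
            (-Int.sign (pos σ (m + 1) - pos σ j) - -Int.sign (pos σ m - pos σ j)) =
            (-1 : ℤ) ^ m *
            (Int.sign (pos σ (m + 1) - pos σ j) - Int.sign (pos σ m - pos σ j)) := by
          rw [pow_succ]; ring
        rw [e3]
        ring
    intro j k hj hjk hkN
    unfold znumT znum
    rw [if_pos hjk.le, if_pos hjk.le]
    exact key (N - k) k (by omega) (by omega) j hj (by omega)
  · -- z̃_{0,j} = 0
    have key0 : ∀ d m, 1 ≤ m → m + d = N + 1 → znRecT σt (N + 1) 0 m = 0 := by
      intro d
      induction d with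
      | zero =>
        intro m h1 hm
        have : m = N + 1 := by omega
        subst this
        rw [znRecT, dif_pos (le_refl (N + 1))]
      | succ d ih =>
        intro m h1 hm
        rw [znRecT, dif_neg (by omega : ¬ N + 1 ≤ m)]
        rw [ih (m + 1) (by omega) (by omega)]
        have hs1 : Int.sign (pos σt (m + 1) - pos σt 0) = 1 := by
          rw [Int.sign_eq_one_iff_pos, hposT0, sub_zero]
          exact hposTpos (m + 1) (by omega) (by omega)
        have hs2 : Int.sign (pos σt m - pos σt 0) = 1 := by
          rw [Int.sign_eq_one_iff_pos, hposT0, sub_zero]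
          exact hposTpos m h1 (by omega)
        rw [hs1, hs2]
        norm_num
    intro j hj1 hj2
    unfold znumT
    rw [if_pos (Nat.zero_le j)]
    exact key0 (N + 1 - j) j hj1 (by omega)
  · -- z̃_{k,N+1} = 0
    intro k hk
    unfold znumT
    rw [if_pos (by omega : k ≤ N + 1)]
    rw [znRecT, dif_pos (le_refl (N + 1))]
end

section
/- (Lemma 6.2) Let σ be a Sturm permutation of {1,…,N}, σ̃ its suspension, and j0 ∈ {1,…,N} a label with n := i_{j0} ≥ 1 (so that ĩ_{j0} = n + 1). Then, for each sign s ∈ {+,−}, the target set E^{n−1}_s(j0) computed for σ (from i, z and ⤳) equals, as a subset of {1,…,N}, the target set E^{n}_s(j0) computed for σ̃ (from ĩ, z̃ and the connection relation of σ̃). Moreover, for each ι ∈ {0,1}, an element m of this common set minimizes (respectively maximizes) |pos_ι(m) − pos_ι(j0)| with the positions of σ (pos_0(m) = m, pos_1(m) = σ⁻¹(m)) if and only if it minimizes (respectively maximizes) |pos̃_ι(m) − pos̃_ι(j0)| with the positions of σ̃ (pos̃_0(m) = m, pos̃_1(m) = σ̃⁻¹(m)); hence the minimax elements underline-v^ι_s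 and overline-v^ι_s coincide for σ and σ̃. -/
/-- **Lemma 6.2.**  For an unstable label `j0` (`n = i_{j0} ≥ 1`, so `ĩ_{j0} = n+1`),
the target set `E^{n-1}_s(j0)` of `σ` coincides with the target set
`E^{n}_s(j0)` of the suspension `σ̃`; moreover an element of this common set is
closest to (resp. most distant from) `j0` in the boundary order `pos_ι` of `σ`
if and only if it is so in the boundary order `pos̃_ι` of `σ̃`; hence the minimax
elements coincide for `σ` and `σ̃`. -/
theorem suspension_minimax_invariance
    (N : ℕ) (σ σt : Equiv.Perm ℕ) (hS : IsSturm N σ)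
    (h0 : σt 0 = 0) (hN1 : σt (N + 1) = N + 1)
    (hmid : ∀ j, 1 ≤ j → j ≤ N → σt j = σ (N + 1 - j))
    (hout : ∀ j, N + 1 < j → σt j = j)
    (j0 : ℕ) (hj01 : 1 ≤ j0) (hj0N : j0 ≤ N)
    (n : ℤ) (hn : n = morse σ j0) (hn1 : 1 ≤ n) (s : Bool) :
    morseT σt j0 = n + 1 ∧
    targetSet σ N j0 (n - 1) s = targetSetT σt (N + 1) j0 n s ∧
    (∀ ι : Fin 2, ∀ m : ℕ,
      (IsClosest (posFn σ ι) j0 (targetSet σ N j0 (n - 1) s) m ↔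
       IsClosest (posFn σt ι) j0 (targetSet σ N j0 (n - 1) s) m) ∧
      (IsFarthest (posFn σ ι) j0 (targetSet σ N j0 (n - 1) s) m ↔
       IsFarthest (posFn σt ι) j0 (targetSet σ N j0 (n - 1) s) m)) := by
  
  -- basic facts about σ
  have hfix0 : σ 0 = 0 := hS.fix_outside 0 (Or.inl rfl)
  have hsr : ∀ j, 1 ≤ j → j ≤ N → 1 ≤ σ.symm j ∧ σ.symm j ≤ N := by
    intro j h1 hN
    constructor
    · by_contra h
      have h0' : σ.symm j = 0 := by omega
      have h3 : σ (σ.symm j) = j := σ.apply_symm_apply j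
      rw [h0', hfix0] at h3
      omega
    · by_contra h
      push_neg at h
      have h2 := hS.fix_outside (σ.symm j) (Or.inr h)
      rw [σ.apply_symm_apply] at h2
      omega
  have hsymmN : σ.symm N = N := (Equiv.symm_apply_eq σ).mpr hS.dissip_N.symm
  -- σt.symm on the various ranges
  have hts : ∀ j, 1 ≤ j → j ≤ N → σt.symm j = N + 1 - σ.symm j := by
    intro j h1 hN
    obtain ⟨ha, hb⟩ := hsr j h1 hN
    rw [Equiv.symm_apply_eq, hmid (N + 1 - σ.symm j) (by omega) (by omega)]
    have e : N + 1 - (N + 1 - σ.symm j) = σ.symm j := by omega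
    rw [e, σ.apply_symm_apply]
  have hts0 : σt.symm 0 = 0 := (Equiv.symm_apply_eq σt).mpr h0.symm
  have htsN1 : σt.symm (N + 1) = N + 1 := (Equiv.symm_apply_eq σt).mpr hN1.symm
  -- positions
  have hposrange : ∀ j, 1 ≤ j → j ≤ N → 1 ≤ pos σ j ∧ pos σ j ≤ (N : ℤ) := by
    intro j h1 hN
    obtain ⟨ha, hb⟩ := hsr j h1 hN
    unfold pos
    omega
  have hpos : ∀ j, 1 ≤ j → j ≤ N → pos σt j = (N : ℤ) + 1 - pos σ j := by
    intro j h1 hN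
    obtain ⟨ha, hb⟩ := hsr j h1 hN
    unfold pos
    rw [hts j h1 hN]
    omega
  have hpos0 : pos σt 0 = 0 := by unfold pos; rw [hts0]; rfl
  have hposN1 : pos σt (N + 1) = (N : ℤ) + 1 := by
    unfold pos; rw [htsN1]; push_cast; ring
  have hposN : pos σ N = (N : ℤ) := by unfold pos; rw [hsymmN]
  have hposlt : ∀ j, 1 ≤ j → j < N → pos σ j ≤ (N : ℤ) - 1 := by
    intro j h1 hN
    obtain ⟨ha, hb⟩ := hsr j h1 (by omega)
    have hne : σ.symm j ≠ N := by
      intro h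
      have h3 : σ (σ.symm j) = j := σ.apply_symm_apply j
      rw [h, hS.dissip_N] at h3
      omega
    unfold pos
    omega
  -- Morse numbers of the suspension
  have hmorse : ∀ j, 1 ≤ j → j ≤ N → morseT σt j = morse σ j + 1 := by
    intro j
    induction j with
    | zero => omega
    | succ j ih =>
      intro _ hN
      rcases Nat.eq_zero_or_pos j with hj | hj
      · subst hj
        have h2 : 0 < pos σt 1 - pos σt 0 := by
          rw [hpos0, hpos 1 le_rfl hS.one_le]
          have := hposrange 1 le_rfl hS.one_le
          omega
        have e : Int.sign (pos σt 1 - pos σt 0) = 1 := Int.sign_eq_one_iff_pos.mpr h2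
        simp [morseT, morse, e]
      · obtain ⟨jj, rfl⟩ : ∃ jj, j = jj + 1 := ⟨j - 1, by omega⟩
        have ihv := ih (by omega) (by omega)
        have e : pos σt (jj + 2) - pos σt (jj + 1) =
            -(pos σ (jj + 2) - pos σ (jj + 1)) := by
          rw [hpos (jj + 2) (by omega) (by omega), hpos (jj + 1) (by omega) (by omega)]
          ring
        show morseT σt (jj + 1) +
            (-1) ^ (jj + 1) * Int.sign (pos σt (jj + 2) - pos σt (jj + 1)) =
          (morse σ (jj + 1) +
            (-1) ^ (jj + 2) * Int.sign (pos σ (jj + 2) - pos σ (jj + 1))) + 1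
        rw [ihv, e, Int.sign_neg, pow_succ (-1 : ℤ) (jj + 1)]
        ring
  -- positions of σt are positive on {1,…,N+1}
  have hposT : ∀ k, 1 ≤ k → k ≤ N + 1 → 1 ≤ pos σt k := by
    intro k h1 h2
    rcases Nat.lt_or_ge k (N + 1) with h | h
    · rw [hpos k h1 (by omega)]
      have := hposrange k h1 (by omega)
      omega
    · have hk : k = N + 1 := by omega
      rw [hk, hposN1]
      omega
  -- zero numbers of the suspension with left label 0 vanish
  have hz0 : ∀ d k, N + 1 ≤ k + d → 1 ≤ k → znRecT σt (N + 1) 0 k = 0 := by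
    intro d
    induction d with
    | zero =>
      intro k hk _
      rw [znRecT, dif_pos (by omega)]
    | succ d ih =>
      intro k hk h1
      by_cases hc : N + 1 ≤ k
      · rw [znRecT, dif_pos hc]
      · rw [znRecT, dif_neg hc, ih (k + 1) (by omega) (by omega), hpos0]
        have e1 : Int.sign (pos σt (k + 1) - 0) = 1 :=
          Int.sign_eq_one_iff_pos.mpr
            (by have := hposT (k + 1) (by omega) (by omega); omega)
        have e2 : Int.sign (pos σt k - 0) = 1 :=
          Int.sign_eq_one_iff_pos.mpr (by have := hposT k h1 (by omega); omega)
        rw [e1, e2]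
        norm_num
  -- zero numbers: base step z̃_{j,N} = 1
  have hbase : ∀ j, 1 ≤ j → j < N → znRecT σt (N + 1) j N = 1 := by
    intro j h1 hjN
    have hpj := hposrange j h1 (by omega)
    have hpj' := hposlt j h1 hjN
    rw [znRecT, dif_neg (by omega : ¬ N + 1 ≤ N), znRecT, dif_pos (le_refl (N + 1))]
    have e1 : Int.sign (pos σt (N + 1) - pos σt j) = 1 := by
      apply Int.sign_eq_one_iff_pos.mpr
      rw [hposN1, hpos j h1 (by omega)]
      omega
    have e2 : Int.sign (pos σt N - pos σt j) = -1 := by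
      apply Int.sign_eq_neg_one_iff_neg.mpr
      rw [hpos N hS.one_le le_rfl, hpos j h1 (by omega), hposN]
      omega
    rw [e1, e2]
    have heven : (-1 : ℤ) ^ (N + 1) = 1 := (Odd.add_one hS.odd_N).neg_one_pow
    rw [heven]
    norm_num
  -- zero numbers: recursion step
  have hstep : ∀ j k, 1 ≤ j → j < k → k < N →
      znRecT σt (N + 1) j (k + 1) = znRec σ N j (k + 1) + 1 →
      znRecT σt (N + 1) j k = znRec σ N j k + 1 := by
    intro j k h1 hjk hkN ih
    rw [znRecT, dif_neg (by omega : ¬ N + 1 ≤ k), znRec, dif_neg (by omega : ¬ N ≤ k), ih]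
    have e1 : pos σt (k + 1) - pos σt j = -(pos σ (k + 1) - pos σ j) := by
      rw [hpos (k + 1) (by omega) (by omega), hpos j (by omega) (by omega)]
      ring
    have e2 : pos σt k - pos σt j = -(pos σ k - pos σ j) := by
      rw [hpos k (by omega) (by omega), hpos j (by omega) (by omega)]
      ring
    have e3 : (-1 : ℤ) ^ (k + 1) *
        (Int.sign (pos σt (k + 1) - pos σt j) - Int.sign (pos σt k - pos σt j)) =
        (-1 : ℤ) ^ k *
        (Int.sign (pos σ (k + 1) - pos σ j) - Int.sign (pos σ k - pos σ j)) := by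
      rw [e1, e2, Int.sign_neg, Int.sign_neg, pow_succ]
      ring
    rw [e3]
    omega
  -- zero numbers translation
  have hzmain : ∀ d j k, 1 ≤ j → j < k → k ≤ N → N ≤ k + d →
      znRecT σt (N + 1) j k = znRec σ N j k + 1 := by
    intro d
    induction d with
    | zero =>
      intro j k h1 hjk hkN hd
      have hk : k = N := by omega
      subst hk
      rw [hbase j h1 hjk, znRec, dif_pos le_rfl]
      norm_num
    | succ d ih =>
      intro j k h1 hjk hkN hd
      rcases Nat.lt_or_ge k N with hk | hk
      · exact hstep j k h1 hjk hk (by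
          rcases Nat.lt_or_ge (k + 1) N with hk1 | hk1
          · exact ih j (k + 1) h1 (by omega) (by omega) (by omega)
          · have hkk : k + 1 = N := by omega
            rw [hkk, hbase j h1 (by omega), znRec, dif_pos le_rfl]
            norm_num)
      · have hk' : k = N := by omega
        subst hk'
        rw [hbase j h1 hjk, znRec, dif_pos le_rfl]
        norm_num
  have hznum : ∀ x y, 1 ≤ x → x ≤ N → 1 ≤ y → y ≤ N → x ≠ y →
      znumT σt (N + 1) x y = znum σ N x y + 1 := by
    intro x y hx1 hxN hy1 hyN hxy
    unfold znumT znum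
    rcases Nat.lt_or_ge x y with h | h
    · rw [if_pos h.le, if_pos h.le]
      exact hzmain N x y hx1 h hyN (by omega)
    · have h' : y < x := by omega
      rw [if_neg (by omega), if_neg (by omega)]
      exact hzmain N y x hy1 h' hxN (by omega)
  -- special zero numbers at labels 0 and N+1
  have hzj00 : znumT σt (N + 1) j0 0 = 0 := by
    unfold znumT
    rw [if_neg (by omega)]
    exact hz0 N j0 (by omega) hj01
  have hzj0N1 : znumT σt (N + 1) j0 (N + 1) = 0 := by
    unfold znumT
    rw [if_pos (by omega), znRecT, dif_pos (le_refl (N + 1))]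
  -- connection relation translation
  have hconn : ∀ m, 1 ≤ m → m ≤ N → m ≠ j0 →
      (ConnectsT σt (N + 1) j0 m ↔ Connects σ N j0 m) := by
    intro m h1 hNm hne
    have key : ∀ mm, min j0 m < mm → mm < max j0 m →
        ((znumT σt (N + 1) (min j0 m) mm = znumT σt (N + 1) j0 m ∧
          znumT σt (N + 1) mm (max j0 m) = znumT σt (N + 1) j0 m) ↔
         (znum σ N (min j0 m) mm = znum σ N j0 m ∧
          znum σ N mm (max j0 m) = znum σ N j0 m)) := by
      intro mm hlo hhi
      rw [hznum (min j0 m) mm (by omega) (by omega) (by omega) (by omega) (by omega),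
          hznum j0 m hj01 hj0N h1 hNm (by omega),
          hznum mm (max j0 m) (by omega) (by omega) (by omega) (by omega) (by omega)]
      omega
    unfold ConnectsT Connects ZAdjT ZAdj
    rw [hmorse m h1 hNm, hmorse j0 hj01 hj0N]
    constructor
    · rintro ⟨hlt, hadj⟩
      exact ⟨by omega, fun mm a b hc => hadj mm a b ((key mm a b).mpr hc)⟩
    · rintro ⟨hlt, hadj⟩
      exact ⟨by omega, fun mm a b hc => hadj mm a b ((key mm a b).mp hc)⟩
  -- set equality
  have hset : targetSet σ N j0 (n - 1) s = targetSetT σt (N + 1) j0 n s := by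
    ext m
    simp only [targetSet, targetSetT, Set.mem_setOf_eq]
    constructor
    · rintro ⟨h1, h2, h3, h4, h5⟩
      have hne : m ≠ j0 := by cases s <;> simp at h3 <;> omega
      refine ⟨by omega, h3, ?_, (hconn m h1 h2 hne).mpr h5⟩
      rw [hznum j0 m hj01 hj0N h1 h2 (by omega)]
      omega
    · rintro ⟨hm, h2, h3, h4⟩
      have hm0 : m ≠ 0 := by
        rintro rfl
        rw [hzj00] at h3
        omega
      have hmN1 : m ≠ N + 1 := by
        rintro rfl
        rw [hzj0N1] at h3
        omega
      have hne : m ≠ j0 := by cases s <;> simp at h2 <;> omega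
      refine ⟨by omega, by omega, h2, ?_, (hconn m (by omega) (by omega) hne).mp h4⟩
      rw [hznum j0 m hj01 hj0N (by omega) (by omega) (by omega)] at h3
      omega
  refine ⟨by rw [hmorse j0 hj01 hj0N, hn], hset, ?_⟩
  intro ι m
  -- distances agree
  have habs : ∀ x, 1 ≤ x → x ≤ N →
      |posFn σt ι x - posFn σt ι j0| = |posFn σ ι x - posFn σ ι j0| := by
    intro x h1 h2
    by_cases hι : ι = 0
    · simp [posFn, hι]
    · simp only [posFn, if_neg hι]
      have e1 := hpos x h1 h2
      have e2 := hpos j0 hj01 hj0N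
      unfold pos at e1 e2
      rw [e1, e2]
      have e3 : ((N : ℤ) + 1 - (σ.symm x : ℤ)) - ((N : ℤ) + 1 - (σ.symm j0 : ℤ)) =
          -((σ.symm x : ℤ) - (σ.symm j0 : ℤ)) := by ring
      rw [e3, abs_neg]
  have hmem : ∀ x, x ∈ targetSet σ N j0 (n - 1) s → 1 ≤ x ∧ x ≤ N :=
    fun x hx => ⟨hx.1, hx.2.1⟩
  constructor
  · constructor
    · rintro ⟨hw, hle⟩
      refine ⟨hw, fun x hx => ?_⟩
      obtain ⟨hx1, hx2⟩ := hmem x hx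
      obtain ⟨hw1, hw2⟩ := hmem m hw
      rw [habs m hw1 hw2, habs x hx1 hx2]
      exact hle x hx
    · rintro ⟨hw, hle⟩
      refine ⟨hw, fun x hx => ?_⟩
      obtain ⟨hx1, hx2⟩ := hmem x hx
      obtain ⟨hw1, hw2⟩ := hmem m hw
      rw [← habs m hw1 hw2, ← habs x hx1 hx2]
      exact hle x hx
  · constructor
    · rintro ⟨hw, hle⟩
      refine ⟨hw, fun x hx => ?_⟩
      obtain ⟨hx1, hx2⟩ := hmem x hx
      obtain ⟨hw1, hw2⟩ := hmem m hw
      rw [habs m hw1 hw2, habs x hx1 hx2]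
      exact hle x hx
    · rintro ⟨hw, hle⟩
      refine ⟨hw, fun x hx => ?_⟩
      obtain ⟨hx1, hx2⟩ := hmem x hx
      obtain ⟨hw1, hw2⟩ := hmem m hw
      rw [← habs m hw1 hw2, ← habs x hx1 hx2]
      exact hle x hx
end

section
/- (Connection equivalence A ≅ A*, equation (616)) Let σ be a Sturm permutation of {1,…,N} and σ̃ its suspension. Then for all labels 1 ≤ j ≤ N and 1 ≤ k ≤ N with j ≠ k: j ⤳ k with respect to σ (i.e. i_j > i_k and j, k are z-adjacent for z) if and only if j ⤳ k with respect to σ̃ (i.e. ĩ_j > ĩ_k and j, k are z-adjacent for z̃). In other words, the suspension preserves the heteroclinic connection relation among the original labels. -/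
/-! ### Auxiliary lemmas for the suspension -/

lemma morseT_step (σ : Equiv.Perm ℕ) (n : ℕ) :
    morseT σ (n + 1) = morseT σ n + (-1) ^ n * Int.sign (pos σ (n + 1) - pos σ n) := rfl

lemma morse_step (σ : Equiv.Perm ℕ) (n : ℕ) :
    morse σ (n + 2) = morse σ (n + 1) + (-1) ^ (n + 2) * Int.sign (pos σ (n + 2) - pos σ (n + 1)) := rfl

lemma znRec_step (σ : Equiv.Perm ℕ) (N j k : ℕ) (h : k < N) :
    znRec σ N j k = znRec σ N j (k + 1) +
      ((-1 : ℤ) ^ k * (Int.sign (pos σ (k + 1) - pos σ j) - Int.sign (pos σ k - pos σ j))) / 2 := by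
  rw [znRec]; simp [Nat.not_le.mpr h]

lemma znRec_stop (σ : Equiv.Perm ℕ) (N j k : ℕ) (h : N ≤ k) : znRec σ N j k = 0 := by
  rw [znRec]; simp [h]

lemma znRecT_step (σ : Equiv.Perm ℕ) (M j k : ℕ) (h : k < M) :
    znRecT σ M j k = znRecT σ M j (k + 1) +
      ((-1 : ℤ) ^ (k + 1) * (Int.sign (pos σ (k + 1) - pos σ j) - Int.sign (pos σ k - pos σ j))) / 2 := by
  rw [znRecT]; simp [Nat.not_le.mpr h]

lemma znRecT_stop (σ : Equiv.Perm ℕ) (M j k : ℕ) (h : M ≤ k) : znRecT σ M j k = 0 := by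
  rw [znRecT]; simp [h]

section Susp

variable {N : ℕ} {σ σt : Equiv.Perm ℕ}

lemma symm_mem (hS : IsSturm N σ) {m : ℕ} (h1 : 1 ≤ m) (h2 : m ≤ N) :
    1 ≤ σ.symm m ∧ σ.symm m ≤ N := by
  by_contra h
  have h' : σ.symm m = 0 ∨ N < σ.symm m := by omega
  have h2' := hS.fix_outside _ h'
  have hm : σ (σ.symm m) = m := σ.apply_symm_apply m
  omega

lemma symmT_eq (hS : IsSturm N σ)
    (hmid : ∀ j, 1 ≤ j → j ≤ N → σt j = σ (N + 1 - j))
    {m : ℕ} (h1 : 1 ≤ m) (h2 : m ≤ N) :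
    σt.symm m = N + 1 - σ.symm m := by
  obtain ⟨ha1, ha2⟩ := symm_mem hS h1 h2
  rw [Equiv.symm_apply_eq, hmid _ (by omega) (by omega),
    show N + 1 - (N + 1 - σ.symm m) = σ.symm m by omega]
  exact (σ.apply_symm_apply m).symm

lemma posT_eq (hS : IsSturm N σ)
    (hmid : ∀ j, 1 ≤ j → j ≤ N → σt j = σ (N + 1 - j))
    {m : ℕ} (h1 : 1 ≤ m) (h2 : m ≤ N) :
    pos σt m = (N : ℤ) + 1 - pos σ m := by
  obtain ⟨ha1, ha2⟩ := symm_mem hS h1 h2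
  unfold pos
  rw [symmT_eq hS hmid h1 h2]
  omega

lemma pos_bounds (hS : IsSturm N σ) {m : ℕ} (h1 : 1 ≤ m) (h2 : m ≤ N) :
    1 ≤ pos σ m ∧ pos σ m ≤ N := by
  obtain ⟨ha1, ha2⟩ := symm_mem hS h1 h2
  unfold pos; omega

lemma sign_flip (N a b : ℤ) :
    Int.sign ((N + 1 - a) - (N + 1 - b)) = - Int.sign (a - b) := by
  rw [show (N + 1 - a) - (N + 1 - b) = -(a - b) by ring, Int.sign_neg]

lemma morseT_suspension (hS : IsSturm N σ) (h0 : σt 0 = 0)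
    (hmid : ∀ j, 1 ≤ j → j ≤ N → σt j = σ (N + 1 - j)) :
    ∀ m, 1 ≤ m → m ≤ N → morseT σt m = morse σ m + 1 := by
  intro m
  induction m with
  | zero => omega
  | succ n ih =>
    intro h1 h2
    match n, ih with
    | 0, _ =>
      rw [morseT_step]
      have hp0 : pos σt 0 = 0 := by
        unfold pos
        rw [(Equiv.symm_apply_eq σt).mpr h0.symm]
        rfl
      have hs1 : σ.symm 1 = 1 := (Equiv.symm_apply_eq σ).mpr hS.dissip_one.symm
      have hp1 : pos σt 1 = N := by
        rw [posT_eq hS hmid le_rfl hS.one_le]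
        unfold pos; rw [hs1]; push_cast; ring
      rw [hp0, hp1]
      have hN : (0 : ℤ) < N := by exact_mod_cast hS.one_le
      simp only [morseT, morse, pow_zero, one_mul, sub_zero]
      rw [Int.sign_eq_one_iff_pos.mpr hN]
    | n + 1, ih =>
      rw [morseT_step, morse_step, ih (by omega) (by omega),
        posT_eq hS hmid (by omega : 1 ≤ n + 2) h2,
        posT_eq hS hmid (by omega : 1 ≤ n + 1) (by omega),
        sign_flip, pow_succ, pow_succ]
      ring

lemma znRecT_suspension (hS : IsSturm N σ) (hN1 : σt (N + 1) = N + 1)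
    (hmid : ∀ j, 1 ≤ j → j ≤ N → σt j = σ (N + 1 - j))
    {j : ℕ} (hj1 : 1 ≤ j) (hjN : j < N) :
    ∀ d k, j ≤ k → k ≤ N → N - k = d →
      znRecT σt (N + 1) j k = znRec σ N j k + 1 := by
  intro d
  induction d with
  | zero =>
    intro k hjk hkN hd
    have hk : N = k := by omega
    subst hk
    rw [znRec_stop σ N j N le_rfl,
      znRecT_step σt (N + 1) j N (by omega),
      znRecT_stop σt (N + 1) j (N + 1) le_rfl]
    have hpN1 : pos σt (N + 1) = (N : ℤ) + 1 := by
      unfold pos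
      rw [(Equiv.symm_apply_eq σt).mpr hN1.symm]
      push_cast; ring
    have hsN : σ.symm N = N := (Equiv.symm_apply_eq σ).mpr hS.dissip_N.symm
    have hpN : pos σt N = 1 := by
      rw [posT_eq hS hmid hS.one_le le_rfl]
      unfold pos; rw [hsN]; ring
    have hsj : σ.symm j ≠ N := by
      intro h
      have : σ (σ.symm j) = j := σ.apply_symm_apply j
      rw [h, hS.dissip_N] at this
      omega
    obtain ⟨hb1, hb2⟩ := symm_mem hS hj1 (by omega)
    have hpj : pos σt j = (N : ℤ) + 1 - pos σ j := posT_eq hS hmid hj1 (by omega)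
    have hbj : pos σ j ≤ (N : ℤ) - 1 := by unfold pos; omega
    have hbj1 : 1 ≤ pos σ j := by unfold pos; omega
    rw [hpN1, hpN, hpj,
      Int.sign_eq_one_iff_pos.mpr (by omega : (0:ℤ) < (N:ℤ) + 1 - ((N:ℤ) + 1 - pos σ j)),
      Int.sign_eq_neg_one_iff_neg.mpr (by omega : (1:ℤ) - ((N:ℤ) + 1 - pos σ j) < 0),
      Even.neg_one_pow hS.odd_N.add_one]
    norm_num
  | succ d ih =>
    intro k hjk hkN hd
    have hkN' : k < N := by omega
    rw [znRec_step σ N j k hkN',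
      znRecT_step σt (N + 1) j k (by omega),
      ih (k + 1) (by omega) (by omega) (by omega),
      posT_eq hS hmid (by omega : 1 ≤ k + 1) (by omega),
      posT_eq hS hmid (by omega : 1 ≤ k) (by omega),
      posT_eq hS hmid hj1 (by omega),
      sign_flip, sign_flip]
    rw [show ((-1 : ℤ) ^ (k + 1) *
        (-Int.sign (pos σ (k + 1) - pos σ j) - -Int.sign (pos σ k - pos σ j))) =
        ((-1 : ℤ) ^ k *
        (Int.sign (pos σ (k + 1) - pos σ j) - Int.sign (pos σ k - pos σ j))) by
      rw [pow_succ]; ring]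
    ring

lemma znum_suspension (hS : IsSturm N σ) (hN1 : σt (N + 1) = N + 1)
    (hmid : ∀ j, 1 ≤ j → j ≤ N → σt j = σ (N + 1 - j))
    {j k : ℕ} (hj1 : 1 ≤ j) (hjN : j ≤ N) (hk1 : 1 ≤ k) (hkN : k ≤ N) (hjk : j ≠ k) :
    znumT σt (N + 1) j k = znum σ N j k + 1 := by
  unfold znum znumT
  rcases le_or_gt j k with h | h
  · rw [if_pos h, if_pos h]
    exact znRecT_suspension hS hN1 hmid hj1 (by omega) (N - k) k h hkN rfl
  · rw [if_neg (by omega), if_neg (by omega)]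
    exact znRecT_suspension hS hN1 hmid hk1 (by omega) (N - j) j (by omega) hjN rfl

end Susp

/-- **Connection equivalence `A ≅ A*`** (equation (616)).  The suspension
preserves the heteroclinic connection relation among the original labels:
for `1 ≤ j, k ≤ N` with `j ≠ k`, `j ⤳ k` with respect to `σ` if and only if
`j ⤳ k` with respect to the suspension `σ̃`. -/
theorem suspension_connection_equivalence
    (N : ℕ) (σ σt : Equiv.Perm ℕ) (hS : IsSturm N σ)
    (h0 : σt 0 = 0) (hN1 : σt (N + 1) = N + 1)
    (hmid : ∀ j, 1 ≤ j → j ≤ N → σt j = σ (N + 1 - j))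
    (hout : ∀ j, N + 1 < j → σt j = j)
    (j k : ℕ) (hj1 : 1 ≤ j) (hjN : j ≤ N) (hk1 : 1 ≤ k) (hkN : k ≤ N)
    (hjk : j ≠ k) :
    Connects σ N j k ↔ ConnectsT σt (N + 1) j k := by
  have hmorse := morseT_suspension hS h0 hmid
  have hz : ∀ a b, 1 ≤ a → a ≤ N → 1 ≤ b → b ≤ N → a ≠ b →
      znumT σt (N + 1) a b = znum σ N a b + 1 := fun a b ha1 haN hb1 hbN hab =>
    znum_suspension hS hN1 hmid ha1 haN hb1 hbN hab
  have hmin1 : 1 ≤ min j k := le_min hj1 hk1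
  have hmaxN : max j k ≤ N := max_le hjN hkN
  constructor
  · rintro ⟨hm, hadj⟩
    refine ⟨by rw [hmorse j hj1 hjN, hmorse k hk1 hkN]; omega, ?_⟩
    intro m h1 h2 ⟨hA, hB⟩
    refine hadj m h1 h2 ⟨?_, ?_⟩
    · have e1 := hz (min j k) m hmin1 (by omega) (by omega) (by omega) (by omega)
      have e2 := hz j k hj1 hjN hk1 hkN hjk
      omega
    · have e1 := hz m (max j k) (by omega) (by omega) (by omega) hmaxN (by omega)
      have e2 := hz j k hj1 hjN hk1 hkN hjk
      omega
  · rintro ⟨hm, hadj⟩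
    refine ⟨by have := hmorse j hj1 hjN; have := hmorse k hk1 hkN; omega, ?_⟩
    intro m h1 h2 ⟨hA, hB⟩
    refine hadj m h1 h2 ⟨?_, ?_⟩
    · have e1 := hz (min j k) m hmin1 (by omega) (by omega) (by omega) (by omega)
      have e2 := hz j k hj1 hjN hk1 hkN hjk
      omega
    · have e1 := hz m (max j k) (by omega) (by omega) (by omega) hmaxN (by omega)
      have e2 := hz j k hj1 hjN hk1 hkN hjk
      omega
end
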